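/- arXiv:1301.5458 — 9 statements merged into one kernel-verified Lean document; each statement's English description precedes it below -/
import Mathlib

section
/- Let m > 0 and q ∈ ℝ with q² ≤ m², and let D(r) = 1 − 2m/r + q²/r² for r > 0. For every r > 0 with D(r) > 0, the condition (1/2)·D′(r) = (2·D(r))/r (equivalently r·D′(r) = 4·D(r), which is the condition for a conformal curve of the congruence to have constant radial coordinate) holds if and only if 2r² − 5mr + 3q² = 0, i.e. if and only if r = (5m ± √(25m² − 24q²))/4. Moreover (5m − √(25m² − 24q²))/4 ≤ r₊ ≤ (5m + √(25m² − 24q²))/4 = r_⊛, where r₊ = m + √(m² − q²). -/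
/-- The metric function `D(r) = 1 - 2m/r + q²/r²` of the Reissner–Nordström spacetime. -/
noncomputable def D (m q r : ℝ) : ℝ := 1 - 2*m/r + q^2/r^2

/-- The radius `r₊ = m + √(m² - q²)` of the event horizon. -/
noncomputable def rplus (m q : ℝ) : ℝ := m + Real.sqrt (m^2 - q^2)

lemma derivD (m q r : ℝ) (hr : 0 < r) :
    deriv (D m q) r = 2*m/r^2 - 2*q^2/r^3 := by
  have hr' : r ≠ 0 := hr.ne'
  have A : HasDerivAt (fun x : ℝ => 2*m/x) ((2*m) * (-(r^2)⁻¹)) r := by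
    simpa [div_eq_mul_inv] using (hasDerivAt_inv hr').const_mul (2*m)
  have h2 : HasDerivAt (fun x : ℝ => x^2) (2*r) r := by
    simpa using hasDerivAt_pow 2 r
  have B : HasDerivAt (fun x : ℝ => q^2/x^2) ((q^2) * (-(2*r) / (r^2)^2)) r := by
    simpa [div_eq_mul_inv] using (h2.inv (pow_ne_zero 2 hr')).const_mul (q^2)
  have C : HasDerivAt (D m q)
      ((0 - (2*m) * (-(r^2)⁻¹)) + (q^2) * (-(2*r) / (r^2)^2)) r :=
    ((hasDerivAt_const r (1:ℝ)).sub A).add B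
  rw [C.deriv]
  field_simp
  ring

/-- For `m > 0`, `q² ≤ m²` and `r > 0` with `D(r) > 0`, the condition
`(1/2)·D′(r) = 2·D(r)/r` (equivalently `r·D′(r) = 4·D(r)`) for a conformal curve of the
congruence to have constant radial coordinate holds iff `2r² - 5mr + 3q² = 0`, i.e. iff
`r = (5m ± √(25m² - 24q²))/4`; moreover
`(5m - √(25m² - 24q²))/4 ≤ r₊ ≤ (5m + √(25m² - 24q²))/4`. -/
theorem constant_radius_condition (m q r : ℝ) (hm : 0 < m) (hq : q^2 ≤ m^2)
    (hr : 0 < r) (hD : 0 < D m q r) :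
    ((1/2) * deriv (D m q) r = 2 * D m q r / r ↔ r * deriv (D m q) r = 4 * D m q r)
    ∧ ((1/2) * deriv (D m q) r = 2 * D m q r / r ↔ 2*r^2 - 5*m*r + 3*q^2 = 0)
    ∧ ((1/2) * deriv (D m q) r = 2 * D m q r / r ↔
        (r = (5*m + Real.sqrt (25*m^2 - 24*q^2))/4 ∨
         r = (5*m - Real.sqrt (25*m^2 - 24*q^2))/4))
    ∧ (5*m - Real.sqrt (25*m^2 - 24*q^2))/4 ≤ rplus m q
    ∧ rplus m q ≤ (5*m + Real.sqrt (25*m^2 - 24*q^2))/4 := by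
  have hr' : r ≠ 0 := hr.ne'
  have h3 : (r:ℝ)^3 ≠ 0 := pow_ne_zero _ hr'
  have h2 : (r:ℝ)^2 ≠ 0 := pow_ne_zero _ hr'
  have hd := derivD m q r hr
  have hDval : D m q r = 1 - 2*m/r + q^2/r^2 := rfl
  set s := Real.sqrt (25*m^2 - 24*q^2) with hs_def
  have hs0 : 0 ≤ s := Real.sqrt_nonneg _
  have hsq : s^2 = 25*m^2 - 24*q^2 :=
    Real.sq_sqrt (by nlinarith)
  set t := Real.sqrt (m^2 - q^2) with ht_def
  have ht0 : 0 ≤ t := Real.sqrt_nonneg _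
  have htq : t^2 = m^2 - q^2 := Real.sq_sqrt (by linarith)
  -- iff with the quadratic
  have key : (1/2) * deriv (D m q) r - 2 * D m q r / r
      = -(2*r^2 - 5*m*r + 3*q^2)/r^3 := by
    rw [hd, hDval]; field_simp; ring
  have iffQ : (1/2) * deriv (D m q) r = 2 * D m q r / r ↔
      2*r^2 - 5*m*r + 3*q^2 = 0 := by
    constructor
    · intro h
      have h0 : -(2*r^2 - 5*m*r + 3*q^2)/r^3 = 0 := by rw [← key]; linarith
      have := (div_eq_zero_iff.mp h0).resolve_right h3
      linarith
    · intro h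
      have : (1/2) * deriv (D m q) r - 2 * D m q r / r = 0 := by
        rw [key, h]; simp
      linarith
  have key2 : r * deriv (D m q) r - 4 * D m q r
      = -2*(2*r^2 - 5*m*r + 3*q^2)/r^2 := by
    rw [hd, hDval]; field_simp; ring
  have iffQ2 : r * deriv (D m q) r = 4 * D m q r ↔
      2*r^2 - 5*m*r + 3*q^2 = 0 := by
    constructor
    · intro h
      have h0 : -2*(2*r^2 - 5*m*r + 3*q^2)/r^2 = 0 := by rw [← key2]; linarith
      have := (div_eq_zero_iff.mp h0).resolve_right h2
      linarith
    · intro h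
      have : r * deriv (D m q) r - 4 * D m q r = 0 := by
        rw [key2, h]; ring
      linarith
  -- factorisation of the quadratic
  have hfac : 2*r^2 - 5*m*r + 3*q^2
      = 2 * ((r - (5*m + s)/4) * (r - (5*m - s)/4)) := by
    linear_combination hsq/8
  have iffRoots : 2*r^2 - 5*m*r + 3*q^2 = 0 ↔
      (r = (5*m + s)/4 ∨ r = (5*m - s)/4) := by
    rw [hfac, mul_eq_zero, mul_eq_zero]
    simp [sub_eq_zero]
  -- inequalities
  have hle : (4*t - m)^2 ≤ 25*m^2 - 24*q^2 := by
    nlinarith [mul_nonneg ht0 hm.le]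
  have habs : |4*t - m| ≤ s := by
    rw [hs_def, ← Real.sqrt_sq_eq_abs]
    exact Real.sqrt_le_sqrt hle
  obtain ⟨hL, hR⟩ := abs_le.mp habs
  refine ⟨iffQ.trans iffQ2.symm, iffQ, iffQ.trans iffRoots, ?_, ?_⟩
  · show _ ≤ m + t
    linarith
  · show m + t ≤ _
    linarith
end

section
/- Let m > 0 and q ∈ ℝ with 0 ≤ q² ≤ m². Then 1/9 ≤ D(r_⊛) ≤ 1/5, with D(r_⊛) = 1/5 when q = 0 and D(r_⊛) = 1/9 when q² = m²; consequently 2/(√5·m) ≤ 1/(r_⊛·√(D(r_⊛))) ≤ 2/m. -/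
set_option maxHeartbeats 1000000


/-- The critical radius `r_⊛ = (5m + √(25m² - 24q²))/4`. -/
noncomputable def rcirc (m q : ℝ) : ℝ := (5*m + Real.sqrt (25*m^2 - 24*q^2))/4

/-- For `m > 0` and `q² ≤ m²` one has `1/9 ≤ D(r_⊛) ≤ 1/5`, with value `1/5` when `q = 0`
and `1/9` in the extremal case `q² = m²`; consequently the unphysical proper time
`τ_{i⁺} = 1/(r_⊛·√(D(r_⊛)))` satisfies `2/(√5·m) ≤ τ_{i⁺} ≤ 2/m`. -/
theorem D_at_critical_radius_bounds (m q : ℝ) (hm : 0 < m) (hq : q^2 ≤ m^2) :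
    (1/9 ≤ D m q (rcirc m q) ∧ D m q (rcirc m q) ≤ 1/5)
    ∧ (q = 0 → D m q (rcirc m q) = 1/5)
    ∧ (q^2 = m^2 → D m q (rcirc m q) = 1/9)
    ∧ 2/(Real.sqrt 5 * m) ≤ 1/(rcirc m q * Real.sqrt (D m q (rcirc m q)))
    ∧ 1/(rcirc m q * Real.sqrt (D m q (rcirc m q))) ≤ 2/m := by
  have hq0 : 0 ≤ q^2 := sq_nonneg q
  set s := Real.sqrt (25*m^2 - 24*q^2) with hs
  have hs0 : 0 ≤ s := Real.sqrt_nonneg _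
  have h1 : s^2 = 25*m^2 - 24*q^2 := Real.sq_sqrt (by nlinarith)
  have hsl : m ≤ s := by nlinarith
  have hsu : s ≤ 5*m := by nlinarith
  have hq2 : q^2 = (25*m^2 - s^2)/24 := by linarith
  have hr : rcirc m q = (5*m + s)/4 := rfl
  clear_value s
  have hrpos : 0 < rcirc m q := by rw [hr]; nlinarith
  have hr0 : rcirc m q ≠ 0 := ne_of_gt hrpos
  have hden : (3:ℝ)*(s + 5*m) ≠ 0 := by nlinarith
  have hD : D m q (rcirc m q) = (s + m)/(3*(s + 5*m)) := by
    rw [D, hr, hq2]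
    have h4 : (5*m + s)/4 ≠ 0 := by
      rw [hr] at hr0; exact hr0
    field_simp
    ring
  have hDl : 1/9 ≤ D m q (rcirc m q) := by
    rw [hD, le_div_iff₀ (by nlinarith)]; linarith
  have hDu : D m q (rcirc m q) ≤ 1/5 := by
    rw [hD, div_le_div_iff₀ (by nlinarith) (by norm_num)]; linarith
  have hDpos : 0 < D m q (rcirc m q) := lt_of_lt_of_le (by norm_num) hDl
  set x := rcirc m q * Real.sqrt (D m q (rcirc m q)) with hx
  have hxpos : 0 < x := mul_pos hrpos (Real.sqrt_pos.mpr hDpos)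
  have hx2 : x^2 = (s + m)*(s + 5*m)/48 := by
    rw [hx, mul_pow, Real.sq_sqrt (le_of_lt hDpos), hD, hr]
    field_simp
    ring
  have hxl : m/2 ≤ x := by nlinarith [hx2, hxpos.le, hsl, hsu]
  have h5 : Real.sqrt 5 ^ 2 = 5 := Real.sq_sqrt (by norm_num)
  have h5pos : 0 < Real.sqrt 5 := Real.sqrt_pos.mpr (by norm_num)
  have hxu : x ≤ Real.sqrt 5 * m / 2 := by
    nlinarith [hx2, hxpos.le, hsl, hsu, h5, h5pos.le, mul_pos h5pos hm]
  refine ⟨⟨hDl, hDu⟩, ?_, ?_, ?_, ?_⟩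
  · intro hq'
    have hq2' : q^2 = 0 := by rw [hq']; ring
    have hs5 : s = 5*m := by nlinarith
    rw [hD, hs5]
    field_simp
    ring
  · intro hq'
    have hs1 : s = m := by nlinarith
    rw [hD, hs1]
    field_simp
    ring
  · rw [div_le_div_iff₀ (mul_pos h5pos hm) hxpos]
    nlinarith
  · rw [div_le_div_iff₀ hxpos hm]
    linarith
end

section
/- Let m > 0, q = m (extremal case), and r_* > m. Then the three real roots of the cubic Q(x) = x³ + ηx + ξ are exactly α₁ = −(r_*/(4(r_* − m)))·(m + √(m(8r_* − 7m))), α₂ = −(r_*/(4(r_* − m)))·(m − √(m(8r_* − 7m))), and α₃ = m·r_*/(2(r_* − m)); that is, Q(x) = (x − α₁)(x − α₂)(x − α₃) for all x. -/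
/-- The constant `β = 2√(D(r_*))/r_*` associated to the conformal curve starting at `r_*`. -/
noncomputable def betaConst (m q rs : ℝ) : ℝ := 2 * Real.sqrt (D m q rs) / rs

/-- The coefficient `η = (D_* - 1)/β²` of the cubic `Q`. -/
noncomputable def etaCoeff (m q rs : ℝ) : ℝ := (D m q rs - 1) / (betaConst m q rs)^2

/-- The coefficient `ξ = q²/(r_*·β²)` of the cubic `Q`. -/
noncomputable def xiCoeff (m q rs : ℝ) : ℝ := q^2 / (rs * (betaConst m q rs)^2)

/-- The cubic `Q(x) = x³ + ηx + ξ`. -/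
noncomputable def Qcubic (m q rs x : ℝ) : ℝ := x^3 + etaCoeff m q rs * x + xiCoeff m q rs

/-- In the extremal case `q = m` with `r_* > m`, the cubic `Q` factorises as
`Q(x) = (x - α₁)(x - α₂)(x - α₃)` with explicit roots
`α₁ = -(r_*/(4(r_* - m)))(m + √(m(8r_* - 7m)))`,
`α₂ = -(r_*/(4(r_* - m)))(m - √(m(8r_* - 7m)))` and `α₃ = m·r_*/(2(r_* - m))`. -/
theorem cubic_factorisation_extremal (m rs : ℝ) (hm : 0 < m) (hrs : m < rs) :
    ∀ x : ℝ, Qcubic m m rs x =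
      (x - (-(rs/(4*(rs - m))) * (m + Real.sqrt (m*(8*rs - 7*m)))))
      * (x - (-(rs/(4*(rs - m))) * (m - Real.sqrt (m*(8*rs - 7*m)))))
      * (x - m*rs/(2*(rs - m))) := by
  intro x
  have hrs0 : 0 < rs := hm.trans hrs
  have hne : rs ≠ 0 := ne_of_gt hrs0
  have hd : 0 < rs - m := by linarith
  have hdm : rs - m ≠ 0 := ne_of_gt hd
  have hD : D m m rs = ((rs - m)/rs)^2 := by
    unfold D; field_simp; ring
  have hsqD : Real.sqrt (D m m rs) = (rs - m)/rs := by
    rw [hD, Real.sqrt_sq (by positivity)]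
  have hβ : betaConst m m rs = 2*(rs - m)/rs^2 := by
    unfold betaConst; rw [hsqD]; field_simp
  set s := Real.sqrt (m*(8*rs - 7*m)) with hs
  have hs2 : s^2 = m*(8*rs - 7*m) := Real.sq_sqrt (by nlinarith)
  rw [show (x - (-(rs/(4*(rs - m))) * (m + s))) * (x - (-(rs/(4*(rs - m))) * (m - s)))
        * (x - m*rs/(2*(rs - m)))
      = ((x + (rs/(4*(rs - m)))*m)^2 - (rs/(4*(rs - m)))^2 * s^2) * (x - m*rs/(2*(rs - m)))
      from by ring, hs2]
  unfold Qcubic etaCoeff xiCoeff D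
  rw [hβ]
  field_simp
  ring
end

section
/- Let m > 0 and q ∈ ℝ with 0 < q² ≤ m², and let r_* > r₊. Then Q(r_*) = r_*·(2r_*² − 5m·r_* + 3q²)/(2·D_*); consequently Q(r_*) ≥ 0 if r_* ∈ [r_⊛, ∞) and Q(r_*) < 0 if r_* ∈ (r₊, r_⊛). -/
/-!
Since `β² = 4D_*/r_*²`, both coefficients of `Q` have the denominator `4D_*`, and after clearing
it `D_*·r_*² = r_*² - 2m·r_* + q²` turns `Q(r_*)` into `r_*(2r_*² - 5m·r_* + 3q²)/(2D_*)`.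
Outside the horizon `D_* > 0`, so the sign of `Q(r_*)` is that of the quadratic, whose roots are
`(5m ± √(25m² - 24q²))/4`. The smaller root is at most `m` because `√(25m² - 24q²) ≥ m`,
hence lies below `r₊`, and the larger root is `r_⊛`.
-/

open Real

section

variable {m q r : ℝ}

lemma D_eq_div (hr : r ≠ 0) : D m q r = (r^2 - 2*m*r + q^2) / r^2 := by
  unfold D
  field_simp

lemma sq_sub_two_mul_add_sq_pos_of_rplus_lt (hq : q^2 ≤ m^2) (hr : rplus m q < r) :
    0 < r^2 - 2*m*r + q^2 := by
  have hs : √(m^2 - q^2) ^ 2 = m^2 - q^2 := sq_sqrt (by linarith)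
  have hlt : √(m^2 - q^2) < r - m := by unfold rplus at hr; linarith
  nlinarith [sqrt_nonneg (m^2 - q^2)]

lemma pos_of_rplus_lt (hm : 0 < m) (hr : rplus m q < r) : 0 < r :=
  hm.trans_le (le_add_of_nonneg_right (sqrt_nonneg _)) |>.trans hr

lemma D_pos_of_rplus_lt (hq : q^2 ≤ m^2) (hr : rplus m q < r) (hr0 : 0 < r) : 0 < D m q r := by
  rw [D_eq_div hr0.ne']
  exact div_pos (sq_sub_two_mul_add_sq_pos_of_rplus_lt hq hr) (by positivity)

lemma betaConst_sq (hD : 0 ≤ D m q r) : betaConst m q r ^ 2 = 4 * D m q r / r^2 := by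
  rw [betaConst, div_pow, mul_pow, sq_sqrt hD]
  norm_num

lemma Qcubic_self_eq (hr : r ≠ 0) (hD : 0 < D m q r) :
    Qcubic m q r r = r * (2*r^2 - 5*m*r + 3*q^2) / (2 * D m q r) := by
  have hDr : D m q r * r^2 = r^2 - 2*m*r + q^2 := by
    rw [D_eq_div hr]
    field_simp
  unfold Qcubic etaCoeff xiCoeff
  rw [betaConst_sq hD.le]
  field_simp
  linear_combination 10 * hDr

lemma two_sq_sub_five_mul_add_three_sq_eq (r : ℝ) (h : 24*q^2 ≤ 25*m^2) :
    2*r^2 - 5*m*r + 3*q^2 = 2 * (r - (5*m - √(25*m^2 - 24*q^2))/4) * (r - rcirc m q) := by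
  unfold rcirc
  linear_combination (1/8 : ℝ) * sq_sqrt (by linarith : 0 ≤ 25*m^2 - 24*q^2)

lemma lowerRoot_lt_of_rplus_lt (hq : q^2 ≤ m^2) (hr : rplus m q < r) :
    (5*m - √(25*m^2 - 24*q^2))/4 < r := by
  have hm : m ≤ √(25*m^2 - 24*q^2) := (le_abs_self m).trans (abs_le_sqrt (by linarith))
  unfold rplus at hr
  linarith [sqrt_nonneg (m^2 - q^2)]

lemma two_sq_sub_five_mul_add_three_sq_nonneg_iff (hq : q^2 ≤ m^2) (hr : rplus m q < r) :
    0 ≤ 2*r^2 - 5*m*r + 3*q^2 ↔ rcirc m q ≤ r := by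
  rw [two_sq_sub_five_mul_add_three_sq_eq r (by linarith [sq_nonneg m]),
    mul_nonneg_iff_of_pos_left (by linarith [lowerRoot_lt_of_rplus_lt hq hr]), sub_nonneg]

lemma Qcubic_self_nonneg_iff (hm : 0 < m) (hq : q^2 ≤ m^2) (hr : rplus m q < r) :
    0 ≤ Qcubic m q r r ↔ rcirc m q ≤ r := by
  have hr0 := pos_of_rplus_lt hm hr
  have hD := D_pos_of_rplus_lt hq hr hr0
  rw [Qcubic_self_eq hr0.ne' hD, le_div_iff₀ (by positivity), zero_mul,
    mul_nonneg_iff_of_pos_left hr0, two_sq_sub_five_mul_add_three_sq_nonneg_iff hq hr]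

end

theorem Q_at_initial_radius_general (m q rs : ℝ) (hm : 0 < m) (hq : q^2 ≤ m^2)
    (hrs : rplus m q < rs) :
    Qcubic m q rs rs = rs * (2*rs^2 - 5*m*rs + 3*q^2) / (2 * D m q rs)
    ∧ (rcirc m q ≤ rs → 0 ≤ Qcubic m q rs rs)
    ∧ (rs < rcirc m q → Qcubic m q rs rs < 0) := by
  have hrs0 := pos_of_rplus_lt hm hrs
  have hsign := Qcubic_self_nonneg_iff hm hq hrs
  exact ⟨Qcubic_self_eq hrs0.ne' (D_pos_of_rplus_lt hq hrs hrs0), hsign.2,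
    fun h => not_le.1 (mt hsign.1 h.not_ge)⟩

/-- For `m > 0`, `0 < q² ≤ m²` and `r_* > r₊` one has
`Q(r_*) = r_*(2r_*² - 5m·r_* + 3q²)/(2D_*)`; consequently `Q(r_*) ≥ 0` if `r_* ≥ r_⊛`
and `Q(r_*) < 0` if `r_* ∈ (r₊, r_⊛)`. -/
theorem Q_at_initial_radius (m q rs : ℝ) (hm : 0 < m) (hq0 : 0 < q^2) (hq : q^2 ≤ m^2)
    (hrs : rplus m q < rs) :
    Qcubic m q rs rs = rs * (2*rs^2 - 5*m*rs + 3*q^2) / (2 * D m q rs)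
    ∧ (rcirc m q ≤ rs → 0 ≤ Qcubic m q rs rs)
    ∧ (rs < rcirc m q → Qcubic m q rs rs < 0) :=
  Q_at_initial_radius_general m q rs hm hq hrs
end

section
/- (Finite proper time to the horizon and the turning point.) Let m > 0 and q ∈ ℝ with 0 < q² ≤ m², and let r_* ∈ (r₊, r_⊛). Let α₁ < 0 < α₂ < r₊ < r_* < α₃ be the three real roots of Q together with r_*. Then the improper integral (1/β)·∫_{α₂}^{r_*} s·ds/√((r_* − s)(s − α₁)(s − α₂)(α₃ − s)) is finite. Consequently, a conformal curve starting at r_* with r′(0) = 0 and evolving by r′(t) = −(β/r(t))·√((r(t) − r_*)(r(t) − α₁)(r(t) − α₂)(r(t) − α₃)) on (α₂, r_*) reaches the values r = r₊ and r = α₂ in finite physical proper time. -/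
section AuxLemmas
open MeasureTheory Set

lemma rpow_half_left (a c : ℝ) :
    IntegrableOn (fun s : ℝ => (s - a) ^ (-2⁻¹ : ℝ)) (Ioo a c) volume := by
  rcases le_or_gt c a with h | h
  · rw [Ioo_eq_empty (by exact fun hh => absurd hh (not_lt.mpr h))]
    exact integrableOn_empty
  · have h0 : IntervalIntegrable (fun x : ℝ => x ^ (-2⁻¹ : ℝ)) volume 0 (c - a) :=
      intervalIntegral.intervalIntegrable_rpow' (by norm_num)
    have h1 := h0.comp_sub_right a
    simp only [zero_add, sub_add_cancel] at h1
    exact (intervalIntegrable_iff_integrableOn_Ioo_of_le (by linarith)).mp h1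

lemma rpow_half_right (c b : ℝ) :
    IntegrableOn (fun s : ℝ => (b - s) ^ (-2⁻¹ : ℝ)) (Ioo c b) volume := by
  rcases le_or_gt b c with h | h
  · rw [Ioo_eq_empty (by exact fun hh => absurd hh (not_lt.mpr h))]
    exact integrableOn_empty
  · have h0 : IntervalIntegrable (fun x : ℝ => x ^ (-2⁻¹ : ℝ)) volume 0 (b - c) :=
      intervalIntegral.intervalIntegrable_rpow' (by norm_num)
    have h1 := h0.comp_sub_left b
    simp only [sub_zero, sub_sub_cancel] at h1
    exact (intervalIntegrable_iff_integrableOn_Ioo_of_le (by linarith)).mp h1.symm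

lemma rpow_half_inv (x : ℝ) (hx : 0 ≤ x) : x ^ (-2⁻¹ : ℝ) = (Real.sqrt x)⁻¹ := by
  rw [Real.sqrt_eq_rpow, ← Real.rpow_neg hx]
  norm_num

lemma integrableOn_aux (a b c₁ c₃ : ℝ) (ha : 0 < a) (hab : a < b) (h1 : c₁ < a) (h3 : b < c₃) :
    IntegrableOn (fun s : ℝ => s / Real.sqrt ((b - s) * (s - c₁) * (s - a) * (c₃ - s)))
      (Ioo a b) volume := by
  set f : ℝ → ℝ := fun s => s / Real.sqrt ((b - s) * (s - c₁) * (s - a) * (c₃ - s)) with hf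
  have hmeas : ∀ u : Set ℝ, AEStronglyMeasurable f (volume.restrict u) := by
    intro u
    apply Measurable.aestronglyMeasurable
    apply Measurable.div measurable_id
    exact (Real.continuous_sqrt.comp (by continuity)).measurable
  set c : ℝ := (a + b) / 2 with hc
  have hac : a < c := by rw [hc]; linarith
  have hcb : c < b := by rw [hc]; linarith
  have hsplit : ∀ s ∈ Ioo a b,
      Real.sqrt ((b - s) * (s - c₁) * (s - a) * (c₃ - s)) =
        Real.sqrt (b - s) * Real.sqrt (s - c₁) * Real.sqrt (s - a) * Real.sqrt (c₃ - s) := by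
    intro s hs
    obtain ⟨hs1, hs2⟩ := hs
    have e1 : (0:ℝ) ≤ b - s := by linarith
    have e2 : (0:ℝ) ≤ s - c₁ := by linarith
    have e3 : (0:ℝ) ≤ s - a := by linarith
    rw [Real.sqrt_mul (by positivity), Real.sqrt_mul (by positivity), Real.sqrt_mul e1]
  -- left half
  have hleft : IntegrableOn f (Ioo a c) volume := by
    apply Integrable.mono'
      (((rpow_half_left a c).const_mul
        (b / (Real.sqrt (b - c) * Real.sqrt (a - c₁) * Real.sqrt (c₃ - b)))))
      (hmeas _)
    rw [ae_restrict_iff' measurableSet_Ioo]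
    apply ae_of_all
    intro s hs
    obtain ⟨hs1, hs2⟩ := hs
    have hsab : s ∈ Ioo a b := ⟨hs1, by linarith⟩
    have p1 : (0:ℝ) < Real.sqrt (b - s) := Real.sqrt_pos.mpr (by linarith)
    have p2 : (0:ℝ) < Real.sqrt (s - c₁) := Real.sqrt_pos.mpr (by linarith)
    have p3 : (0:ℝ) < Real.sqrt (s - a) := Real.sqrt_pos.mpr (by linarith)
    have p4 : (0:ℝ) < Real.sqrt (c₃ - s) := Real.sqrt_pos.mpr (by linarith)
    have q1 : (0:ℝ) < Real.sqrt (b - c) := Real.sqrt_pos.mpr (by linarith)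
    have q2 : (0:ℝ) < Real.sqrt (a - c₁) := Real.sqrt_pos.mpr (by linarith)
    have q4 : (0:ℝ) < Real.sqrt (c₃ - b) := Real.sqrt_pos.mpr (by linarith)
    have hfs : f s = s / (Real.sqrt (b - s) * Real.sqrt (s - c₁) * Real.sqrt (s - a) *
        Real.sqrt (c₃ - s)) := by rw [hf]; simp only; rw [hsplit s hsab]
    have hnorm : ‖f s‖ = f s := by
      rw [Real.norm_eq_abs, abs_of_nonneg]
      rw [hfs]
      exact div_nonneg (by linarith) (by positivity)
    rw [hnorm, hfs, rpow_half_inv _ (by linarith)]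
    have hb : b / (Real.sqrt (b - c) * Real.sqrt (a - c₁) * Real.sqrt (c₃ - b)) *
        (Real.sqrt (s - a))⁻¹ =
        b / (Real.sqrt (b - c) * Real.sqrt (a - c₁) * Real.sqrt (s - a) *
          Real.sqrt (c₃ - b)) := by ring
    rw [hb]
    have h4 : Real.sqrt (b - c) * Real.sqrt (a - c₁) * Real.sqrt (s - a) *
        Real.sqrt (c₃ - b) ≤ Real.sqrt (b - s) * Real.sqrt (s - c₁) * Real.sqrt (s - a) *
        Real.sqrt (c₃ - s) := by
      gcongr <;> linarith
    exact div_le_div₀ (by linarith) (by linarith)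
      (mul_pos (mul_pos (mul_pos q1 q2) p3) q4) h4
  -- right half
  have hright : IntegrableOn f (Ioo c b) volume := by
    apply Integrable.mono'
      (((rpow_half_right c b).const_mul
        (b / (Real.sqrt (c - c₁) * Real.sqrt (c - a) * Real.sqrt (c₃ - b)))))
      (hmeas _)
    rw [ae_restrict_iff' measurableSet_Ioo]
    apply ae_of_all
    intro s hs
    obtain ⟨hs1, hs2⟩ := hs
    have hsab : s ∈ Ioo a b := ⟨by linarith, hs2⟩
    have p1 : (0:ℝ) < Real.sqrt (b - s) := Real.sqrt_pos.mpr (by linarith)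
    have p2 : (0:ℝ) < Real.sqrt (s - c₁) := Real.sqrt_pos.mpr (by linarith)
    have p3 : (0:ℝ) < Real.sqrt (s - a) := Real.sqrt_pos.mpr (by linarith)
    have p4 : (0:ℝ) < Real.sqrt (c₃ - s) := Real.sqrt_pos.mpr (by linarith)
    have q1 : (0:ℝ) < Real.sqrt (c - c₁) := Real.sqrt_pos.mpr (by linarith)
    have q2 : (0:ℝ) < Real.sqrt (c - a) := Real.sqrt_pos.mpr (by linarith)
    have q4 : (0:ℝ) < Real.sqrt (c₃ - b) := Real.sqrt_pos.mpr (by linarith)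
    have hfs : f s = s / (Real.sqrt (b - s) * Real.sqrt (s - c₁) * Real.sqrt (s - a) *
        Real.sqrt (c₃ - s)) := by rw [hf]; simp only; rw [hsplit s hsab]
    have hnorm : ‖f s‖ = f s := by
      rw [Real.norm_eq_abs, abs_of_nonneg]
      rw [hfs]
      exact div_nonneg (by linarith) (by positivity)
    rw [hnorm, hfs, rpow_half_inv _ (by linarith)]
    have hb : b / (Real.sqrt (c - c₁) * Real.sqrt (c - a) * Real.sqrt (c₃ - b)) *
        (Real.sqrt (b - s))⁻¹ =
        b / (Real.sqrt (b - s) * Real.sqrt (c - c₁) * Real.sqrt (c - a) *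
          Real.sqrt (c₃ - b)) := by ring
    rw [hb]
    have h4 : Real.sqrt (b - s) * Real.sqrt (c - c₁) * Real.sqrt (c - a) *
        Real.sqrt (c₃ - b) ≤ Real.sqrt (b - s) * Real.sqrt (s - c₁) * Real.sqrt (s - a) *
        Real.sqrt (c₃ - s) := by
      gcongr <;> linarith
    exact div_le_div₀ (by linarith) (by linarith)
      (mul_pos (mul_pos (mul_pos p1 q1) q2) q4) h4
  have hr' : IntegrableOn f (Ico c b) volume :=
    (integrableOn_Ico_iff_integrableOn_Ioo).mpr hright
  apply (hleft.union hr').mono_set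
  intro x hx
  rcases lt_or_ge x c with h | h
  · exact Or.inl ⟨hx.1, h⟩
  · exact Or.inr ⟨h, hx.2⟩

end AuxLemmas

open MeasureTheory Set in
/-- Finite proper time to the horizon and the turning point: for `r_* ∈ (r₊, r_⊛)` and
`α₁ < 0 < α₂ < r₊ < r_* < α₃` the roots of `Q`, the improper integral
`∫_{α₂}^{r_*} s ds/√((r_*-s)(s-α₁)(s-α₂)(α₃-s))` is finite, and the time any decreasing
solution of `r′ = -(β/r)√((r-r_*)(r-α₁)(r-α₂)(r-α₃))` spends in `(α₂, r_*)` is bounded by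
`(1/β)` times this integral; hence the curve reaches `r = r₊` and `r = α₂` in finite
physical proper time. -/
theorem finite_time_to_horizon (m q rs α₁ α₂ α₃ : ℝ)
    (hm : 0 < m) (hq0 : 0 < q^2) (hq : q^2 ≤ m^2)
    (h1 : rplus m q < rs) (h2 : rs < rcirc m q)
    (hα₁ : Qcubic m q rs α₁ = 0) (hα₂ : Qcubic m q rs α₂ = 0)
    (hα₃ : Qcubic m q rs α₃ = 0)
    (hord : α₁ < 0 ∧ 0 < α₂ ∧ α₂ < rplus m q ∧ rs < α₃) :
    MeasureTheory.IntegrableOn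
      (fun s => s / Real.sqrt ((rs - s) * (s - α₁) * (s - α₂) * (α₃ - s)))
      (Set.Ioo α₂ rs) MeasureTheory.volume
    ∧ ∀ (T : ℝ) (r : ℝ → ℝ), 0 < T → r 0 = rs →
        (∀ t ∈ Set.Ioo (0:ℝ) T, r t ∈ Set.Ioo α₂ rs ∧
          HasDerivAt r (-(betaConst m q rs / r t) *
            Real.sqrt ((r t - rs) * (r t - α₁) * (r t - α₂) * (r t - α₃))) t) →
        StrictAntiOn r (Set.Icc 0 T) →
        T ≤ (1 / betaConst m q rs) *
          ∫ s in Set.Ioo α₂ rs,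
            s / Real.sqrt ((rs - s) * (s - α₁) * (s - α₂) * (α₃ - s)) := by
  obtain ⟨ho1, ho2, ho3, ho4⟩ := hord
  have hrp0 : 0 < rplus m q := by
    have := Real.sqrt_nonneg (m^2 - q^2); unfold rplus; linarith
  have hrs0 : 0 < rs := lt_trans hrp0 h1
  have hab : α₂ < rs := lt_trans ho3 h1
  set f : ℝ → ℝ := fun s => s / Real.sqrt ((rs - s) * (s - α₁) * (s - α₂) * (α₃ - s)) with hfdef
  have hint : IntegrableOn f (Ioo α₂ rs) volume :=
    integrableOn_aux α₂ rs α₁ α₃ ho2 hab (lt_trans ho1 ho2) ho4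
  refine ⟨hint, ?_⟩
  have hsq0 : Real.sqrt (m^2 - q^2) < rs - m := by
    unfold rplus at h1; linarith
  have hkey : m^2 - q^2 < (rs - m)^2 := by
    nlinarith [Real.sq_sqrt (sub_nonneg.mpr hq), Real.sqrt_nonneg (m^2 - q^2)]
  have hD : 0 < D m q rs := by
    have hD' : D m q rs = (rs^2 - 2*m*rs + q^2)/rs^2 := by
      unfold D; field_simp
    rw [hD']
    exact div_pos (by nlinarith) (by positivity)
  have hβ : 0 < betaConst m q rs := by
    unfold betaConst
    have := Real.sqrt_pos.mpr hD
    positivity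
  set β := betaConst m q rs with hβdef
  have hf0 : ∀ s ∈ Ioo α₂ rs, 0 ≤ f s := fun s hs =>
    div_nonneg (le_of_lt (lt_trans ho2 hs.1)) (Real.sqrt_nonneg _)
  set I : ℝ := ∫ s in Ioo α₂ rs, f s with hI
  have hI0 : 0 ≤ I := setIntegral_nonneg measurableSet_Ioo hf0
  set G : ℝ → ℝ := fun x => ∫ s in x..rs, f s with hG
  have hinterval : ∀ x ∈ Ioo α₂ rs, IntervalIntegrable f volume x rs := by
    intro x hx
    rw [intervalIntegrable_iff_integrableOn_Ioo_of_le hx.2.le]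
    exact hint.mono_set (Ioo_subset_Ioo hx.1.le le_rfl)
  have hGform : ∀ x ∈ Ioo α₂ rs, G x = ∫ s in Ioo x rs, f s := by
    intro x hx
    show (∫ s in x..rs, f s) = ∫ s in Ioo x rs, f s
    rw [intervalIntegral.integral_of_le hx.2.le, MeasureTheory.integral_Ioc_eq_integral_Ioo]
  have hG0 : ∀ x ∈ Ioo α₂ rs, 0 ≤ G x := by
    intro x hx; rw [hGform x hx]
    exact setIntegral_nonneg measurableSet_Ioo (fun s hs => hf0 s ⟨lt_trans hx.1 hs.1, hs.2⟩)
  have hGI : ∀ x ∈ Ioo α₂ rs, G x ≤ I := by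
    intro x hx; rw [hGform x hx, hI]
    apply setIntegral_mono_set hint
    · exact (ae_restrict_iff' measurableSet_Ioo).mpr (ae_of_all _ hf0)
    · exact (Ioo_subset_Ioo hx.1.le le_rfl).eventuallyLE
  have hfmeas : Measurable f := by
    apply Measurable.div measurable_id
    exact (Real.continuous_sqrt.comp (by fun_prop)).measurable
  have hGderiv : ∀ x ∈ Ioo α₂ rs, HasDerivAt G (-(f x)) x := by
    intro x hx
    have e1 : (0:ℝ) < rs - x := by linarith [hx.2]
    have e2 : (0:ℝ) < x - α₁ := by have := hx.1; linarith
    have e3 : (0:ℝ) < x - α₂ := by have := hx.1; linarith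
    have e4 : (0:ℝ) < α₃ - x := by have := hx.2; linarith
    have hsq : 0 < Real.sqrt ((rs - x) * (x - α₁) * (x - α₂) * (α₃ - x)) :=
      Real.sqrt_pos.mpr (by positivity)
    have hcont : ContinuousAt f x := by
      apply ContinuousAt.div continuousAt_id
      · exact (Real.continuous_sqrt.comp (by fun_prop)).continuousAt
      · exact ne_of_gt hsq
    exact intervalIntegral.integral_hasDerivAt_left (hinterval x hx)
      (hfmeas.aestronglyMeasurable.stronglyMeasurableAtFilter) hcont
  intro T r hT hr0 hode hanti
  have key : ∀ t₀ t : ℝ, 0 < t₀ → t₀ ≤ t → t < T → t - t₀ ≤ (1/β) * I := by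
    intro t₀ t h0 hle hlt
    have hder : ∀ u ∈ Icc t₀ t, HasDerivAt (fun u => (1/β) * G (r u) - u) 0 u := by
      intro u hu
      have huT : u ∈ Ioo 0 T := ⟨lt_of_lt_of_le h0 hu.1, lt_of_le_of_lt hu.2 hlt⟩
      obtain ⟨hmem, hdr⟩ := hode u huT
      have hA : (r u - rs) * (r u - α₁) * (r u - α₂) * (r u - α₃)
          = (rs - r u) * (r u - α₁) * (r u - α₂) * (α₃ - r u) := by ring
      rw [hA] at hdr
      have e1 : (0:ℝ) < rs - r u := by linarith [hmem.2]
      have e2 : (0:ℝ) < r u - α₁ := by have := hmem.1; linarith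
      have e3 : (0:ℝ) < r u - α₂ := by have := hmem.1; linarith
      have e4 : (0:ℝ) < α₃ - r u := by have := hmem.2; linarith
      have hApos : (0:ℝ) < (rs - r u) * (r u - α₁) * (r u - α₂) * (α₃ - r u) := by positivity
      have hsA : 0 < Real.sqrt ((rs - r u) * (r u - α₁) * (r u - α₂) * (α₃ - r u)) :=
        Real.sqrt_pos.mpr hApos
      have hru : 0 < r u := lt_trans ho2 hmem.1
      have hcomp : HasDerivAt (fun x => G (r x))
          (-(f (r u)) * (-(β / r u) *
            Real.sqrt ((rs - r u) * (r u - α₁) * (r u - α₂) * (α₃ - r u)))) u :=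
        (hGderiv (r u) hmem).comp u hdr
      have hsub : HasDerivAt (fun u => (1/β) * G (r u) - u)
          ((1/β) * (-(f (r u)) * (-(β / r u) *
            Real.sqrt ((rs - r u) * (r u - α₁) * (r u - α₂) * (α₃ - r u)))) - 1) u :=
        (hcomp.const_mul (1/β)).sub (hasDerivAt_id' (x := u))
      have hfru : f (r u) = r u /
          Real.sqrt ((rs - r u) * (r u - α₁) * (r u - α₂) * (α₃ - r u)) := rfl
      have hval : (1/β) * (-(f (r u)) * (-(β / r u) *
          Real.sqrt ((rs - r u) * (r u - α₁) * (r u - α₂) * (α₃ - r u)))) - 1 = 0 := by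
        rw [hfru]
        field_simp
        ring
      rw [hval] at hsub
      exact hsub
    have hcont : ContinuousOn (fun u => (1/β) * G (r u) - u) (Icc t₀ t) :=
      fun u hu => ((hder u hu).continuousAt).continuousWithinAt
    have hconst := constant_of_has_deriv_right_zero hcont
      (fun u hu => (hder u ⟨hu.1, hu.2.le⟩).hasDerivWithinAt) t (right_mem_Icc.mpr hle)
    have hmem₀ := (hode t₀ ⟨h0, lt_of_le_of_lt hle hlt⟩).1
    have hmemt := (hode t ⟨lt_of_lt_of_le h0 hle, hlt⟩).1
    have e1 : (1/β) * G (r t) - t = (1/β) * G (r t₀) - t₀ := hconst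
    have e2 := hGI (r t) hmemt
    have e3 := hG0 (r t₀) hmem₀
    have hβ' : (0:ℝ) < 1/β := by positivity
    nlinarith [mul_le_mul_of_nonneg_left e2 hβ'.le, mul_nonneg hβ'.le e3]
  by_contra hC
  push_neg at hC
  have hC0 : 0 ≤ (1/β) * I := mul_nonneg (by positivity) hI0
  have h0 : 0 < (T - (1/β)*I)/3 := by linarith
  have := key ((T - (1/β)*I)/3) (T - ((T - (1/β)*I)/3)/2) h0 (by linarith) (by linarith)
  linarith
end

section
/- (Deviation equation along the critical curve.) Let k > 0, β ∈ (0, k], ζ > 0 and ω₀ ≥ 1. Then the unique solution of the initial value problem ω″(t) = k²·ω(t) + ζ, ω(0) = ω₀, ω′(0) = 0 is ω(t) = (ω₀ + ζ/k²)·cosh(k·t) − ζ/k²; it satisfies ω(t) > 0 for all t ≥ 0 and ω′(t) > 0 for all t > 0, and moreover ω(t) ≥ ω₀·cosh²(β·t/2) for all t ≥ 0. -/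
/-!
The explicit solution is checked by differentiating twice. Uniqueness is uniqueness for the
first-order system `(ω, ω′)′ = (ω′, k²ω + ζ)`, whose right-hand side is Lipschitz. For the lower
bound, write `ω(t) = ω₀ cosh(kt) + (ζ/k²)(cosh(kt) - 1)`; the second term is nonnegative and
`cosh²(βt/2) = (1 + cosh(βt))/2 ≤ cosh(βt) ≤ cosh(kt)` because `β ≤ k`. Positivity of `ω` then
follows from the lower bound.
-/

open Real

section SecondOrderUniqueness

variable {E : Type*} [NormedAddCommGroup E] [NormedSpace ℝ E]

theorem eq_of_deriv_deriv_eq_of_lipschitzWith {F : E → E} {K : NNReal} (hF : LipschitzWith K F)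
    {f g : ℝ → E} (hf : Differentiable ℝ f) (hf' : Differentiable ℝ (deriv f))
    (hf'' : ∀ t, deriv (deriv f) t = F (f t))
    (hg : Differentiable ℝ g) (hg' : Differentiable ℝ (deriv g))
    (hg'' : ∀ t, deriv (deriv g) t = F (g t))
    {t₀ : ℝ} (h₀ : f t₀ = g t₀) (h₀' : deriv f t₀ = deriv g t₀) : f = g := by
  have hv : ∀ _ : ℝ, LipschitzOnWith _ (fun p : E × E => (p.2, F p.1)) Set.univ := fun _ =>
    (LipschitzWith.prod_snd.prodMk (hF.comp LipschitzWith.prod_fst)).lipschitzOnWith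
  have hasDerivAt_state : ∀ u : ℝ → E, Differentiable ℝ u → Differentiable ℝ (deriv u) →
      (∀ t, deriv (deriv u) t = F (u t)) → ∀ t,
        HasDerivAt (fun s => (u s, deriv u s)) (deriv u t, F (u t)) t ∧
          (u t, deriv u t) ∈ Set.univ := fun u hu hu' hu'' t =>
    ⟨by simpa only [hu''] using (hu t).hasDerivAt.prodMk (hu' t).hasDerivAt, trivial⟩
  have hstate := ODE_solution_unique_univ hv (hasDerivAt_state f hf hf' hf'') (hasDerivAt_state g hg hg' hg'')
    (t₀ := t₀) (by simp [h₀, h₀'])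
  funext t
  exact congrArg Prod.fst (congrFun hstate t)

end SecondOrderUniqueness

theorem Real.cosh_half_sq_le_cosh (x : ℝ) : cosh (x / 2) ^ 2 ≤ cosh x := by
  have h := cosh_two_mul (x / 2)
  rw [mul_div_cancel₀ x two_ne_zero] at h
  nlinarith [sq_nonneg (sinh (x / 2))]

noncomputable def deviationSolution (k ζ ω₀ : ℝ) : ℝ → ℝ :=
  fun t => (ω₀ + ζ / k ^ 2) * cosh (k * t) - ζ / k ^ 2

namespace deviationSolution

variable (k ζ ω₀ : ℝ)

theorem apply_zero : deviationSolution k ζ ω₀ 0 = ω₀ := by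
  simp [deviationSolution]

theorem hasDerivAt (t : ℝ) :
    HasDerivAt (deviationSolution k ζ ω₀) ((ω₀ + ζ / k ^ 2) * k * sinh (k * t)) t := by
  have := (((hasDerivAt_id t).const_mul k).cosh.const_mul (ω₀ + ζ / k ^ 2)).sub_const (ζ / k ^ 2)
  exact this.congr_deriv (by simp only [id_eq, mul_one]; ring)

theorem deriv_eq :
    deriv (deviationSolution k ζ ω₀) = fun t => (ω₀ + ζ / k ^ 2) * k * sinh (k * t) :=
  funext fun t => (hasDerivAt k ζ ω₀ t).deriv

theorem hasDerivAt_deriv (t : ℝ) :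
    HasDerivAt (deriv (deviationSolution k ζ ω₀)) ((ω₀ + ζ / k ^ 2) * k ^ 2 * cosh (k * t)) t := by
  rw [deriv_eq]
  have := ((hasDerivAt_id t).const_mul k).sinh.const_mul ((ω₀ + ζ / k ^ 2) * k)
  exact this.congr_deriv (by simp only [id_eq, mul_one]; ring)

theorem differentiable : Differentiable ℝ (deviationSolution k ζ ω₀) :=
  fun t => (hasDerivAt k ζ ω₀ t).differentiableAt

theorem differentiable_deriv : Differentiable ℝ (deriv (deviationSolution k ζ ω₀)) :=
  fun t => (hasDerivAt_deriv k ζ ω₀ t).differentiableAt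

theorem deriv_zero : deriv (deviationSolution k ζ ω₀) 0 = 0 := by
  simp [deriv_eq]

variable {k}

theorem deriv_deriv (hk : k ≠ 0) (t : ℝ) :
    deriv (deriv (deviationSolution k ζ ω₀)) t = k ^ 2 * deviationSolution k ζ ω₀ t + ζ := by
  rw [(hasDerivAt_deriv k ζ ω₀ t).deriv, deviationSolution]
  field_simp
  ring

variable {ζ ω₀}

theorem deriv_pos (hk : 0 < k) (hζ : 0 ≤ ζ) (hω₀ : 0 < ω₀) {t : ℝ} (ht : 0 < t) :
    0 < deriv (deviationSolution k ζ ω₀) t := by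
  have hsinh : 0 < sinh (k * t) := sinh_pos_iff.mpr (mul_pos hk ht)
  rw [deriv_eq]
  positivity

theorem mul_cosh_sq_le {β : ℝ} (hβk : |β| ≤ |k|) (hζ : 0 ≤ ζ) (hω₀ : 0 ≤ ω₀) (t : ℝ) :
    ω₀ * cosh (β * t / 2) ^ 2 ≤ deviationSolution k ζ ω₀ t := by
  have hcosh : cosh (β * t) ≤ cosh (k * t) := by
    rw [cosh_le_cosh, abs_mul, abs_mul]
    exact mul_le_mul_of_nonneg_right hβk (abs_nonneg t)
  have hrest : 0 ≤ ζ / k ^ 2 * (cosh (k * t) - 1) :=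
    mul_nonneg (by positivity) (sub_nonneg.mpr (one_le_cosh _))
  calc ω₀ * cosh (β * t / 2) ^ 2 ≤ ω₀ * cosh (k * t) :=
        mul_le_mul_of_nonneg_left ((cosh_half_sq_le_cosh _).trans hcosh) hω₀
    _ ≤ ω₀ * cosh (k * t) + ζ / k ^ 2 * (cosh (k * t) - 1) := le_add_of_nonneg_right hrest
    _ = deviationSolution k ζ ω₀ t := by rw [deviationSolution]; ring

end deviationSolution

theorem deviation_along_critical_curve_general (k β ζ ω₀ : ℝ)
    (hβ : 0 < β) (hβk : β ≤ k) (hζ : 0 < ζ) (hω₀ : 1 ≤ ω₀) :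
    ((fun t : ℝ => (ω₀ + ζ/k^2) * Real.cosh (k*t) - ζ/k^2) 0 = ω₀
      ∧ deriv (fun t : ℝ => (ω₀ + ζ/k^2) * Real.cosh (k*t) - ζ/k^2) 0 = 0
      ∧ ∀ t : ℝ,
          deriv (deriv (fun t : ℝ => (ω₀ + ζ/k^2) * Real.cosh (k*t) - ζ/k^2)) t
            = k^2 * ((ω₀ + ζ/k^2) * Real.cosh (k*t) - ζ/k^2) + ζ)
    ∧ (∀ ω : ℝ → ℝ,
        (∀ t : ℝ, DifferentiableAt ℝ ω t) →
        (∀ t : ℝ, DifferentiableAt ℝ (deriv ω) t) →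
        (∀ t : ℝ, deriv (deriv ω) t = k^2 * ω t + ζ) →
        ω 0 = ω₀ → deriv ω 0 = 0 →
        ω = fun t : ℝ => (ω₀ + ζ/k^2) * Real.cosh (k*t) - ζ/k^2)
    ∧ (∀ t : ℝ, 0 ≤ t → 0 < (ω₀ + ζ/k^2) * Real.cosh (k*t) - ζ/k^2)
    ∧ (∀ t : ℝ, 0 < t →
        0 < deriv (fun t : ℝ => (ω₀ + ζ/k^2) * Real.cosh (k*t) - ζ/k^2) t)
    ∧ (∀ t : ℝ, 0 ≤ t →
        ω₀ * (Real.cosh (β*t/2))^2 ≤ (ω₀ + ζ/k^2) * Real.cosh (k*t) - ζ/k^2) := by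
  have hk : 0 < k := hβ.trans_le hβk
  have hω₀_pos : 0 < ω₀ := zero_lt_one.trans_le hω₀
  have hβk' : |β| ≤ |k| := by rwa [abs_of_pos hβ, abs_of_pos hk]
  have hsol := deviationSolution.deriv_deriv ζ ω₀ hk.ne'
  have hlower := deviationSolution.mul_cosh_sq_le hβk' hζ.le hω₀_pos.le
  refine ⟨⟨deviationSolution.apply_zero k ζ ω₀, deviationSolution.deriv_zero k ζ ω₀, hsol⟩,
    fun ω hω hω' hω'' hω0 hω'0 => ?_, fun t _ => ?_,
    fun t ht => deviationSolution.deriv_pos hk hζ.le hω₀_pos ht, fun t _ => hlower t⟩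
  · exact eq_of_deriv_deriv_eq_of_lipschitzWith
      ((lipschitzWith_smul (k ^ 2)).add (LipschitzWith.const ζ)) hω hω' hω''
      (deviationSolution.differentiable k ζ ω₀) (deviationSolution.differentiable_deriv k ζ ω₀) hsol
      (hω0.trans (deviationSolution.apply_zero k ζ ω₀).symm)
      (hω'0.trans (deviationSolution.deriv_zero k ζ ω₀).symm)
  · exact (by positivity : 0 < ω₀ * cosh (β * t / 2) ^ 2).trans_le (hlower t)

/-- Deviation equation along the critical curve: for `k > 0`, `β ∈ (0, k]`, `ζ > 0` and
`ω₀ ≥ 1`, the unique solution of `ω″ = k²ω + ζ`, `ω(0) = ω₀`, `ω′(0) = 0` is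
`ω(t) = (ω₀ + ζ/k²)cosh(kt) - ζ/k²`; it is positive for `t ≥ 0`, strictly increasing for
`t > 0`, and satisfies `ω(t) ≥ ω₀·cosh²(βt/2)` for `t ≥ 0`. -/
theorem deviation_along_critical_curve (k β ζ ω₀ : ℝ)
    (hk : 0 < k) (hβ : 0 < β) (hβk : β ≤ k) (hζ : 0 < ζ) (hω₀ : 1 ≤ ω₀) :
    ((fun t : ℝ => (ω₀ + ζ/k^2) * Real.cosh (k*t) - ζ/k^2) 0 = ω₀
      ∧ deriv (fun t : ℝ => (ω₀ + ζ/k^2) * Real.cosh (k*t) - ζ/k^2) 0 = 0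
      ∧ ∀ t : ℝ,
          deriv (deriv (fun t : ℝ => (ω₀ + ζ/k^2) * Real.cosh (k*t) - ζ/k^2)) t
            = k^2 * ((ω₀ + ζ/k^2) * Real.cosh (k*t) - ζ/k^2) + ζ)
    ∧ (∀ ω : ℝ → ℝ,
        (∀ t : ℝ, DifferentiableAt ℝ ω t) →
        (∀ t : ℝ, DifferentiableAt ℝ (deriv ω) t) →
        (∀ t : ℝ, deriv (deriv ω) t = k^2 * ω t + ζ) →
        ω 0 = ω₀ → deriv ω 0 = 0 →
        ω = fun t : ℝ => (ω₀ + ζ/k^2) * Real.cosh (k*t) - ζ/k^2)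
    ∧ (∀ t : ℝ, 0 ≤ t → 0 < (ω₀ + ζ/k^2) * Real.cosh (k*t) - ζ/k^2)
    ∧ (∀ t : ℝ, 0 < t →
        0 < deriv (fun t : ℝ => (ω₀ + ζ/k^2) * Real.cosh (k*t) - ζ/k^2) t)
    ∧ (∀ t : ℝ, 0 ≤ t →
        ω₀ * (Real.cosh (β*t/2))^2 ≤ (ω₀ + ζ/k^2) * Real.cosh (k*t) - ζ/k^2) :=
  deviation_along_critical_curve_general k β ζ ω₀ hβ hβk hζ hω₀
end

section
/- (Comparison lemma for the deviation equation.) Let β > 0 and let p : [0, ∞) → ℝ be continuous with p(t) ≥ β² for all t ≥ 0. Let ζ ∈ ℝ be a constant and let ω : [0, ∞) → ℝ be twice differentiable with ω″(t) = p(t)·ω(t) + ζ for all t ≥ 0, ω(0) = ω₀ > 0 and ω′(0) = 0. If ω₀ + 2·min(ζ, 0)/β² > 0, then ω(t) ≥ (ω₀ + 2·min(ζ, 0)/β²)·cosh(β·t) > 0 for all t ≥ 0. -/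
/-!
The explicit solution `u t = (ω₀ + ζ / β²) cosh (β t) - ζ / β²` of `u'' = β² u + ζ` with the
initial data of `ω` lies above `(ω₀ + 2 min ζ 0 / β²) cosh (β t)`. While `ω ≥ 0`, the difference
`w = ω - u` satisfies `w'' - β² w = (p - β²) ω ≥ 0` with `w 0 = w' 0 = 0`; factoring
`w'' - β² w = (d/dt - β) (d/dt + β) w` into two first-order inequalities, each solved by an
integrating factor, gives `w ≥ 0`. Hence `ω ≥ u > 0` up to the first zero of `ω`, so there is none.
-/

open Real Set

theorem nonneg_of_deriv_add_mul_nonneg {g g' : ℝ → ℝ} {a b c : ℝ} (hab : a ≤ b)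
    (hg : ∀ t ∈ Icc a b, HasDerivAt g (g' t) t) (h : ∀ t ∈ Ioo a b, 0 ≤ g' t + c * g t)
    (ha : 0 ≤ g a) : 0 ≤ g b := by
  have hderiv : ∀ t ∈ Icc a b, HasDerivAt (fun t => exp (c * t) * g t)
      (exp (c * t) * (g' t + c * g t)) t := fun t ht => by
    have hexp := ((hasDerivAt_id' t).const_mul c).exp
    exact (hexp.mul (hg t ht)).congr_deriv (by ring)
  have hmono : MonotoneOn (fun t => exp (c * t) * g t) (Icc a b) :=
    monotoneOn_of_hasDerivWithinAt_nonneg (convex_Icc a b)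
      (fun t ht => (hderiv t ht).continuousAt.continuousWithinAt)
      (fun t ht => (hderiv t (interior_subset ht)).hasDerivWithinAt)
      (fun t ht => mul_nonneg (exp_pos _).le (h t (by rwa [interior_Icc] at ht)))
  have hends := hmono (left_mem_Icc.2 hab) (right_mem_Icc.2 hab) hab
  exact nonneg_of_mul_nonneg_right ((mul_nonneg (exp_pos _).le ha).trans hends) (exp_pos _)

theorem nonneg_of_sq_mul_le_second_deriv {w w' w'' : ℝ → ℝ} {a b β : ℝ} (hab : a ≤ b)
    (hw : ∀ t ∈ Icc a b, HasDerivAt w (w' t) t) (hw' : ∀ t ∈ Icc a b, HasDerivAt w' (w'' t) t)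
    (h : ∀ t ∈ Ioo a b, β ^ 2 * w t ≤ w'' t) (ha : w a = 0) (ha' : 0 ≤ w' a) : 0 ≤ w b := by
  have hfirst : ∀ t ∈ Icc a b, 0 ≤ w' t + β * w t := fun t ht => by
    have hsub : Icc a t ⊆ Icc a b := Icc_subset_Icc_right ht.2
    refine nonneg_of_deriv_add_mul_nonneg (g := fun s => w' s + β * w s) (c := -β) ht.1
      (fun s hs => (hw' s (hsub hs)).add ((hw s (hsub hs)).const_mul β)) (fun s hs => ?_)
      (by simpa [ha] using ha')
    linarith [h s ⟨hs.1, hs.2.trans_le ht.2⟩]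
  exact nonneg_of_deriv_add_mul_nonneg hab hw (fun t ht => hfirst t (Ioo_subset_Icc_self ht))
    ha.ge

noncomputable def coshSolution (β ζ ω₀ t : ℝ) : ℝ := (ω₀ + ζ / β ^ 2) * cosh (β * t) - ζ / β ^ 2

noncomputable def coshSolution' (β ζ ω₀ t : ℝ) : ℝ := (ω₀ + ζ / β ^ 2) * (β * sinh (β * t))

section coshSolution

variable {β ζ ω₀ : ℝ}

theorem hasDerivAt_coshSolution (t : ℝ) :
    HasDerivAt (coshSolution β ζ ω₀) (coshSolution' β ζ ω₀ t) t := by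
  have h := (((hasDerivAt_id' t).const_mul β).cosh.const_mul (ω₀ + ζ / β ^ 2)).sub_const
    (ζ / β ^ 2)
  exact h.congr_deriv (by rw [coshSolution']; ring)

theorem hasDerivAt_coshSolution' (hβ : β ≠ 0) (t : ℝ) :
    HasDerivAt (coshSolution' β ζ ω₀) (β ^ 2 * coshSolution β ζ ω₀ t + ζ) t := by
  have h := (((hasDerivAt_id' t).const_mul β).sinh.const_mul β).const_mul (ω₀ + ζ / β ^ 2)
  exact h.congr_deriv (by rw [coshSolution]; field_simp; ring)

@[simp]
theorem coshSolution_zero : coshSolution β ζ ω₀ 0 = ω₀ := by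
  simp [coshSolution]

@[simp]
theorem coshSolution'_zero : coshSolution' β ζ ω₀ 0 = 0 := by
  simp [coshSolution']

theorem mul_cosh_le_coshSolution (t : ℝ) :
    (ω₀ + 2 * min ζ 0 / β ^ 2) * cosh (β * t) ≤ coshSolution β ζ ω₀ t := by
  have hcosh := one_le_cosh (β * t)
  rw [coshSolution]
  rcases le_total ζ 0 with hζ | hζ
  · have hc : ζ / β ^ 2 ≤ 0 := div_nonpos_of_nonpos_of_nonneg hζ (sq_nonneg β)
    rw [min_eq_left hζ, mul_div_assoc]
    nlinarith
  · have hc : 0 ≤ ζ / β ^ 2 := div_nonneg hζ (sq_nonneg β)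
    rw [min_eq_right hζ, mul_zero, zero_div, add_zero]
    nlinarith

end coshSolution

theorem coshSolution_le_of_nonneg {β ζ ω₀ T : ℝ} {p ω ω' : ℝ → ℝ} (hβ : β ≠ 0) (hT : 0 ≤ T)
    (hp : ∀ t ∈ Ioo 0 T, β ^ 2 ≤ p t)
    (hω : ∀ t ∈ Icc 0 T, HasDerivAt ω (ω' t) t)
    (hω' : ∀ t ∈ Icc 0 T, HasDerivAt ω' (p t * ω t + ζ) t)
    (h0 : ω 0 = ω₀) (h0' : 0 ≤ ω' 0) (hnonneg : ∀ t ∈ Ioo 0 T, 0 ≤ ω t) :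
    coshSolution β ζ ω₀ T ≤ ω T := by
  have hw := nonneg_of_sq_mul_le_second_deriv (w := fun t => ω t - coshSolution β ζ ω₀ t) hT
    (fun t ht => (hω t ht).sub (hasDerivAt_coshSolution t))
    (fun t ht => (hω' t ht).sub (hasDerivAt_coshSolution' hβ t))
    (fun t ht => by nlinarith [hp t ht, hnonneg t ht]) (by simp [h0]) (by simpa using h0')
  exact sub_nonneg.1 hw

theorem pos_of_nonneg_Ioo_imp_pos {f : ℝ → ℝ} {a : ℝ} (hf : ContinuousOn f (Ici a))
    (h : ∀ T, a ≤ T → (∀ s ∈ Ioo a T, 0 ≤ f s) → 0 < f T) (t : ℝ) (ht : a ≤ t) : 0 < f t := by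
  by_contra! hft
  set S := Ici a ∩ f ⁻¹' Iic 0
  have hSbdd : BddBelow S := ⟨a, fun s hs => hs.1⟩
  have hτ : sInf S ∈ S :=
    (hf.preimage_isClosed_of_isClosed isClosed_Ici isClosed_Iic).csInf_mem ⟨t, ht, hft⟩ hSbdd
  refine (h (sInf S) hτ.1 fun s hs => ?_).not_ge hτ.2
  by_contra! hfs
  exact (csInf_le hSbdd ⟨hs.1.le, hfs.le⟩).not_gt hs.2

theorem deviation_comparison_lemma_general (β ζ ω₀ : ℝ) (p ω : ℝ → ℝ)
    (hβ : 0 < β)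
    (hpl : ∀ t : ℝ, 0 ≤ t → β^2 ≤ p t)
    (hdiff : ∀ t : ℝ, 0 ≤ t → DifferentiableAt ℝ ω t)
    (hdiff2 : ∀ t : ℝ, 0 ≤ t → DifferentiableAt ℝ (deriv ω) t)
    (hode : ∀ t : ℝ, 0 ≤ t → deriv (deriv ω) t = p t * ω t + ζ)
    (hω0 : ω 0 = ω₀) (hω'0 : deriv ω 0 = 0)
    (hcond : 0 < ω₀ + 2 * min ζ 0 / β^2) :
    ∀ t : ℝ, 0 ≤ t →
      (ω₀ + 2 * min ζ 0 / β^2) * Real.cosh (β*t) ≤ ω t ∧ 0 < ω t := by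
  have hcomparison : ∀ T, 0 ≤ T → (∀ s ∈ Ioo 0 T, 0 ≤ ω s) →
      (ω₀ + 2 * min ζ 0 / β ^ 2) * cosh (β * T) ≤ ω T := fun T hT hnonneg =>
    (mul_cosh_le_coshSolution T).trans <| coshSolution_le_of_nonneg hβ.ne' hT
      (fun t ht => hpl t ht.1.le) (fun t ht => (hdiff t ht.1).hasDerivAt)
      (fun t ht => hode t ht.1 ▸ (hdiff2 t ht.1).hasDerivAt) hω0 hω'0.ge hnonneg
  have hpos : ∀ t, 0 ≤ t → 0 < ω t :=
    pos_of_nonneg_Ioo_imp_pos (fun t ht => (hdiff t ht).continuousAt.continuousWithinAt)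
      fun T hT hnonneg => (mul_pos hcond (cosh_pos _)).trans_le (hcomparison T hT hnonneg)
  exact fun t ht => ⟨hcomparison t ht fun s hs => (hpos s hs.1.le).le, hpos t ht⟩

/-- Comparison lemma for the deviation equation: let `β > 0`, `p` continuous on `[0,∞)`
with `p(t) ≥ β²` there, `ζ` a constant, and `ω` twice differentiable with
`ω″ = p·ω + ζ` on `[0,∞)`, `ω(0) = ω₀ > 0`, `ω′(0) = 0`. If `ω₀ + 2·min(ζ,0)/β² > 0`,
then `ω(t) ≥ (ω₀ + 2·min(ζ,0)/β²)·cosh(βt) > 0` for all `t ≥ 0`. -/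
theorem deviation_comparison_lemma (β ζ ω₀ : ℝ) (p ω : ℝ → ℝ)
    (hβ : 0 < β)
    (hpcont : ContinuousOn p (Set.Ici 0))
    (hpl : ∀ t : ℝ, 0 ≤ t → β^2 ≤ p t)
    (hdiff : ∀ t : ℝ, 0 ≤ t → DifferentiableAt ℝ ω t)
    (hdiff2 : ∀ t : ℝ, 0 ≤ t → DifferentiableAt ℝ (deriv ω) t)
    (hode : ∀ t : ℝ, 0 ≤ t → deriv (deriv ω) t = p t * ω t + ζ)
    (hω0 : ω 0 = ω₀) (hω₀pos : 0 < ω₀) (hω'0 : deriv ω 0 = 0)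
    (hcond : 0 < ω₀ + 2 * min ζ 0 / β^2) :
    ∀ t : ℝ, 0 ≤ t →
      (ω₀ + 2 * min ζ 0 / β^2) * Real.cosh (β*t) ≤ ω t ∧ 0 < ω t :=
  deviation_comparison_lemma_general β ζ ω₀ p ω hβ hpl hdiff hdiff2 hode hω0 hω'0 hcond
end

section
/- (Proposition: no conjugate points up to the horizon for q² ≤ (8/9)m².) Let m > 0 and q ∈ ℝ with 0 < q² ≤ (8/9)·m², and let r_* ∈ (r₊, r_⊛). Set D_* = D(r_*), β = 2√(D_*)/r_*, ϱ_* = (1/2)(r_* − m + √(r_*² − 2m·r_* + q²)), ω_* = r_*/ϱ_*, and ζ = −2(r_*² − 3m·r_* + 2q²)/(ϱ_*·r_*³). Let T > 0 and let r : [0, T] → ℝ be twice differentiable with r(0) = r_*, r′(0) = 0, r″(t) = −(1/2)·D′(r(t)) + β·√(D(r(t)) + r′(t)²) and D(r(t)) + r′(t)² ≥ 0 for all t ∈ [0, T], r(t) > r₊ for t ∈ [0, T) and r(T) = r₊. Let ω : [0, T] → ℝ be twice differentiable with ω″(t) = (β² + 2m/r(t)³ − 3q²/r(t)⁴)·ω(t)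 + ζ for all t ∈ [0, T], ω(0) = ω_* and ω′(0) = 0. Then ω(t) > 0 for all t ∈ [0, T]. -/
/-- The isotropic radial coordinate `ϱ_* = (1/2)(r_* - m + √(r_*² - 2m·r_* + q²))`. -/
noncomputable def isot (m q rs : ℝ) : ℝ := (1/2) * (rs - m + Real.sqrt (rs^2 - 2*m*rs + q^2))

set_option maxHeartbeats 1000000 in
/-- No conjugate points up to the horizon for `q² ≤ (8/9)m²`: along a conformal curve
starting at `r_* ∈ (r₊, r_⊛)` and reaching the horizon at time `T`, the deviation scalar
`ω` solving `ω″ = (β² + 2m/r³ - 3q²/r⁴)ω + ζ` with the initial data of the congruence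
remains positive on `[0, T]`. -/
theorem no_conjugate_points_up_to_horizon (m q rs T : ℝ) (r ω : ℝ → ℝ)
    (hm : 0 < m) (hq0 : 0 < q^2) (hq : q^2 ≤ (8/9) * m^2)
    (h1 : rplus m q < rs) (h2 : rs < rcirc m q) (hT : 0 < T)
    (hr0 : r 0 = rs) (hr'0 : deriv r 0 = 0)
    (hrdiff : ∀ t ∈ Set.Icc (0:ℝ) T, DifferentiableAt ℝ r t)
    (hrdiff2 : ∀ t ∈ Set.Icc (0:ℝ) T, DifferentiableAt ℝ (deriv r) t)
    (hrrad : ∀ t ∈ Set.Icc (0:ℝ) T, 0 ≤ D m q (r t) + (deriv r t)^2)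
    (hrode : ∀ t ∈ Set.Icc (0:ℝ) T, deriv (deriv r) t =
      -(1/2) * deriv (D m q) (r t)
        + (2 * Real.sqrt (D m q rs) / rs) * Real.sqrt (D m q (r t) + (deriv r t)^2))
    (hrin : ∀ t ∈ Set.Ico (0:ℝ) T, rplus m q < r t)
    (hrT : r T = rplus m q)
    (hωdiff : ∀ t ∈ Set.Icc (0:ℝ) T, DifferentiableAt ℝ ω t)
    (hωdiff2 : ∀ t ∈ Set.Icc (0:ℝ) T, DifferentiableAt ℝ (deriv ω) t)
    (hωode : ∀ t ∈ Set.Icc (0:ℝ) T, deriv (deriv ω) t =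
      ((2 * Real.sqrt (D m q rs) / rs)^2 + 2*m/(r t)^3 - 3*q^2/(r t)^4) * ω t
        + (-2 * (rs^2 - 3*m*rs + 2*q^2) / (isot m q rs * rs^3)))
    (hω0 : ω 0 = rs / isot m q rs)
    (hω'0 : deriv ω 0 = 0) :
    ∀ t ∈ Set.Icc (0:ℝ) T, 0 < ω t := by

  -- basic square roots
  have hq2m : q^2 ≤ m^2 := le_trans hq (by nlinarith)
  set s1 := Real.sqrt (m^2 - q^2) with hs1def
  have hs1n : 0 ≤ s1 := Real.sqrt_nonneg _
  have hs1 : s1^2 = m^2 - q^2 := Real.sq_sqrt (by linarith)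
  set s3 := Real.sqrt (25*m^2 - 24*q^2) with hs3def
  have hs3n : 0 ≤ s3 := Real.sqrt_nonneg _
  have hs3 : s3^2 = 25*m^2 - 24*q^2 := Real.sq_sqrt (by nlinarith)
  have ha : m + s1 < rs := h1
  have hb : 4*rs < 5*m + s3 := by
    have := h2; rw [rcirc] at this; linarith
  have hs1ge : m/3 ≤ s1 := by nlinarith [sq_nonneg (s1 - m/3)]
  have hrpge : 4*m/3 ≤ rplus m q := by rw [rplus]; linarith
  have hrs0 : 0 < rs := by linarith
  -- rs² - 3m rs + 2q² < 0
  have hK : rs^2 - 3*m*rs + 2*q^2 < 0 := by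
    nlinarith [mul_pos (sub_pos.mpr ha) (sub_pos.mpr hb), sq_nonneg s1, sq_nonneg s3,
      mul_nonneg hs1n hs3n, mul_pos hm hrs0, mul_nonneg hs1n hm.le, mul_nonneg hs3n hm.le]
  -- isotropic coordinate positive
  have hP : 0 < isot m q rs := by
    rw [isot]
    have := Real.sqrt_nonneg (rs^2 - 2*m*rs + q^2)
    nlinarith
  -- the constant ζ is positive
  set ζ := -2 * (rs^2 - 3*m*rs + 2*q^2) / (isot m q rs * rs^3) with hζdef
  have hζ : 0 < ζ := by
    apply div_pos (by linarith) (mul_pos hP (by positivity))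
  -- ω 0 > 0
  have hω0pos : 0 < ω 0 := by rw [hω0]; exact div_pos hrs0 hP
  -- r t ≥ rplus on [0,T]
  have hrge : ∀ t ∈ Set.Icc (0:ℝ) T, rplus m q ≤ r t := by
    intro t ht
    rcases eq_or_lt_of_le ht.2 with h | h
    · rw [h, hrT]
    · exact (hrin t ⟨ht.1, h⟩).le
  -- coefficient A is nonnegative
  have hA : ∀ t ∈ Set.Icc (0:ℝ) T,
      0 ≤ (2 * Real.sqrt (D m q rs) / rs)^2 + 2*m/(r t)^3 - 3*q^2/(r t)^4 := by
    intro t ht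
    have hx : 4*m/3 ≤ r t := le_trans hrpge (hrge t ht)
    have hx0 : 0 < r t := by linarith
    have heq : 2*m/(r t)^3 - 3*q^2/(r t)^4 = (2*m*(r t) - 3*q^2)/(r t)^4 := by
      field_simp
    have hnum : 0 ≤ 2*m*(r t) - 3*q^2 := by
      have h8 := mul_le_mul_of_nonneg_left hx (by positivity : (0:ℝ) ≤ 2*m)
      have h9 : 2*m*(4*m/3) = 8/3*m^2 := by ring
      linarith
    have h2 : 0 ≤ (2*m*(r t) - 3*q^2)/(r t)^4 := div_nonneg hnum (by positivity)
    have := sq_nonneg (2 * Real.sqrt (D m q rs) / rs)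
    linarith [heq ▸ h2]
  -- main argument: suppose ω is not positive somewhere
  by_contra hcon
  push_neg at hcon
  obtain ⟨t0, ht0, ht0ω⟩ := hcon
  set S : Set ℝ := {t | t ∈ Set.Icc (0:ℝ) T ∧ ω t ≤ 0} with hSdef
  have hSne : S.Nonempty := ⟨t0, ht0, ht0ω⟩
  have hSbdd : BddBelow S := ⟨0, fun x hx => hx.1.1⟩
  have hcontω : ContinuousOn ω (Set.Icc (0:ℝ) T) :=
    fun x hx => ((hωdiff x hx).continuousAt).continuousWithinAt
  have hSclosed : IsClosed S := by
    have : S = Set.Icc (0:ℝ) T ∩ ω ⁻¹' (Set.Iic 0) := by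
      ext x; simp [hSdef, Set.mem_Icc, and_comm]
    rw [this]
    exact hcontω.preimage_isClosed_of_isClosed isClosed_Icc isClosed_Iic
  set sI := sInf S with hsIdef
  have hsImem : sI ∈ S := hSclosed.csInf_mem hSne hSbdd
  have hsI0 : 0 ≤ sI := hsImem.1.1
  have hsIT : sI ≤ T := hsImem.1.2
  have hsIpos : 0 < sI := by
    rcases eq_or_lt_of_le hsI0 with h | h
    · exfalso; have := hsImem.2; rw [← h] at this; linarith
    · exact h
  have hsub : Set.Icc (0:ℝ) sI ⊆ Set.Icc (0:ℝ) T :=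
    Set.Icc_subset_Icc le_rfl hsIT
  -- ω positive strictly before sI
  have hpos : ∀ x ∈ Set.Ico (0:ℝ) sI, 0 < ω x := by
    intro x hx
    by_contra hxn
    push_neg at hxn
    have : x ∈ S := ⟨⟨hx.1, le_trans hx.2.le hsIT⟩, hxn⟩
    exact absurd (csInf_le hSbdd this) (not_le.mpr hx.2)
  -- deriv ω is strictly monotone on [0, sI]
  have hmono1 : StrictMonoOn (deriv ω) (Set.Icc 0 sI) := by
    apply strictMonoOn_of_deriv_pos (convex_Icc 0 sI)
    · exact fun x hx => ((hωdiff2 x (hsub hx)).continuousAt).continuousWithinAt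
    · intro x hx
      rw [interior_Icc] at hx
      have hxT : x ∈ Set.Icc (0:ℝ) T := hsub ⟨hx.1.le, hx.2.le⟩
      rw [hωode x hxT]
      have h1 := hA x hxT
      have h2 := hpos x ⟨hx.1.le, hx.2⟩
      have := mul_nonneg h1 h2.le
      rw [hζdef] at hζ ⊢
      linarith
  -- hence deriv ω > 0 on (0, sI)
  have hd : ∀ x ∈ Set.Ioo (0:ℝ) sI, 0 < deriv ω x := by
    intro x hx
    have := hmono1 ⟨le_rfl, hsIpos.le⟩ ⟨hx.1.le, hx.2.le⟩ hx.1
    rw [hω'0] at this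
    exact this
  -- ω strictly monotone on [0, sI]
  have hmono2 : StrictMonoOn ω (Set.Icc 0 sI) := by
    apply strictMonoOn_of_deriv_pos (convex_Icc 0 sI)
    · exact fun x hx => ((hωdiff x (hsub hx)).continuousAt).continuousWithinAt
    · intro x hx
      rw [interior_Icc] at hx
      exact hd x hx
  have : ω 0 < ω sI := hmono2 ⟨le_rfl, hsIpos.le⟩ ⟨hsIpos.le, le_rfl⟩ hsIpos
  linarith [hsImem.2]
end

section
/- (Proposition: no conjugate points near the critical radius in the extremal case.) Let m > 0 and q = m, so r₊ = m and r_⊛ = 3m/2. There exists r_⋆ ∈ (m, 3m/2) such that for every r_* ∈ (r_⋆, 3m/2) the following holds. Set D_* = (1 − m/r_*)², β = 2(r_* − m)/r_*², ω_* = r_*/(r_* − m), and ζ = −2(r_* − 2m)/r_*³. Let T > 0 and let r : [0, T] → ℝ be twice differentiable with r(0) = r_*, r′(0) = 0, r″(t) = −(1/2)·D′(r(t)) + β·√(D(r(t)) + r′(t)²) and D(r(t)) + r′(t)² ≥ 0 for all t ∈ [0, T], r(t) > m for t ∈ [0, T) and r(T) = m. Let ω : [0, T] → ℝ be twice differentiable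 with ω″(t) = (β² + 2m/r(t)³ − 3m²/r(t)⁴)·ω(t) + ζ for all t ∈ [0, T], ω(0) = ω_* and ω′(0) = 0. Then ω(t) > 0 for all t ∈ [0, T]. -/
open Set

theorem forall_pos_of_forall_Ico_pos {f : ℝ → ℝ} {a b : ℝ} (hf : ContinuousOn f (Icc a b))
    (h : ∀ c ∈ Icc a b, (∀ t ∈ Ico a c, 0 < f t) → 0 < f c) : ∀ t ∈ Icc a b, 0 < f t := by
  by_contra! hneg
  obtain ⟨t₁, ht₁, hft₁⟩ := hneg
  let S := {t ∈ Icc a b | f t ≤ 0}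
  have hS : IsClosed S := hf.preimage_isClosed_of_isClosed isClosed_Icc isClosed_Iic
  have hbdd : BddBelow S := ⟨a, fun t ht => ht.1.1⟩
  obtain ⟨hc, hfc⟩ := hS.csInf_mem ⟨t₁, ht₁, hft₁⟩ hbdd
  refine (h _ hc fun t ht => ?_).not_ge hfc
  by_contra! hft
  exact (csInf_le hbdd ⟨⟨ht.1, ht.2.le.trans hc.2⟩, hft⟩).not_gt ht.2

theorem forall_le_of_forall_notMem_Ioo {f : ℝ → ℝ} {a b c d : ℝ} (hf : ContinuousOn f (Icc a b))
    (ha : f a ≤ c) (hcd : c < d) (havoid : ∀ t ∈ Icc a b, f t ∉ Ioo c d) :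
    ∀ t ∈ Icc a b, f t ≤ c := by
  intro t ht
  by_contra! hct
  have hmin := lt_min hct hcd
  obtain ⟨s, hs, hfs⟩ := intermediate_value_Icc ht.1 (hf.mono (Icc_subset_Icc_right ht.2))
    (show (c + min (f t) d) / 2 ∈ Icc (f a) (f t) by
      constructor <;> linarith [min_le_left (f t) d])
  refine havoid s ⟨hs.1, hs.2.trans ht.2⟩ ?_
  rw [hfs]
  constructor <;> linarith [min_le_right (f t) d]

theorem eq_zero_of_hasDerivAt_eq_mul {F k : ℝ → ℝ} {a b : ℝ} (hk : ContinuousOn k (Icc a b))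
    (hF : ∀ t ∈ Icc a b, HasDerivAt F (k t * F t) t) (ha : F a = 0) :
    ∀ t ∈ Icc a b, F t = 0 := by
  obtain ⟨K, hK⟩ := isCompact_Icc.exists_bound_of_continuousOn hk
  intro t ht
  have hGronwall := norm_le_gronwallBound_of_norm_deriv_right_le (δ := 0) (ε := 0)
    (fun t ht => (hF t ht).continuousAt.continuousWithinAt)
    (fun t ht => (hF t (Ico_subset_Icc_self ht)).hasDerivWithinAt) (by simp [ha])
    (fun t ht => by
      rw [norm_mul, add_zero]
      exact mul_le_mul_of_nonneg_right (hK t (Ico_subset_Icc_self ht)) (norm_nonneg _)) t ht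
  rw [gronwallBound_ε0_δ0] at hGronwall
  exact norm_le_zero_iff.1 hGronwall

theorem pos_of_sturm_comparison {V u u' u'' ω ω' ω'' : ℝ → ℝ} {a b : ℝ}
    (hu : ∀ t ∈ Icc a b, HasDerivAt u (u' t) t) (hu' : ∀ t ∈ Icc a b, HasDerivAt u' (u'' t) t)
    (hω : ∀ t ∈ Icc a b, HasDerivAt ω (ω' t) t) (hω' : ∀ t ∈ Icc a b, HasDerivAt ω' (ω'' t) t)
    (hu_pos : ∀ t ∈ Icc a b, 0 < u t) (hu'' : ∀ t ∈ Icc a b, u'' t ≤ V t * u t)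
    (hω'' : ∀ t ∈ Icc a b, V t * ω t ≤ ω'' t) (hωa : 0 < ω a) (hWa : ω a * u' a ≤ ω' a * u a) :
    ∀ t ∈ Icc a b, 0 < ω t := by
  refine forall_pos_of_forall_Ico_pos (fun t ht => (hω t ht).continuousAt.continuousWithinAt) ?_
  intro c hc hpos
  have hsub : Icc a c ⊆ Icc a b := Icc_subset_Icc_right hc.2
  have hac : a ∈ Icc a c := left_mem_Icc.2 hc.1
  have hcc : c ∈ Icc a c := right_mem_Icc.2 hc.1
  -- the Wronskian `ω' u - ω u'` has derivative `ω'' u - ω u'' ≥ ω (V u - u'') ≥ 0` while `ω ≥ 0`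
  have hW : MonotoneOn (fun t => ω' t * u t - ω t * u' t) (Icc a c) := by
    refine monotoneOn_of_hasDerivWithinAt_nonneg (f' := fun t => ω'' t * u t - ω t * u'' t)
      (convex_Icc a c) (fun t ht => ?_) (fun t ht => ?_) (fun t ht => ?_)
    · exact (((hω' t (hsub ht)).mul (hu t (hsub ht))).sub
        ((hω t (hsub ht)).mul (hu' t (hsub ht)))).continuousAt.continuousWithinAt
    · rw [interior_Icc] at ht
      have ht' := hsub (Ioo_subset_Icc_self ht)
      have hd : HasDerivAt (fun s => ω' s * u s - ω s * u' s)
          (ω'' t * u t + ω' t * u' t - (ω' t * u' t + ω t * u'' t)) t :=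
        ((hω' t ht').mul (hu t ht')).sub ((hω t ht').mul (hu' t ht'))
      exact (hd.congr_deriv (by ring)).hasDerivWithinAt
    · rw [interior_Icc] at ht
      have ht' := hsub (Ioo_subset_Icc_self ht)
      nlinarith [mul_le_mul_of_nonneg_right (hω'' t ht') (hu_pos t ht').le,
        mul_le_mul_of_nonneg_left (hu'' t ht') (hpos t (Ioo_subset_Ico_self ht)).le]
  have hquot : MonotoneOn (fun t => ω t / u t) (Icc a c) := by
    refine monotoneOn_of_hasDerivWithinAt_nonneg
      (f' := fun t => (ω' t * u t - ω t * u' t) / u t ^ 2) (convex_Icc a c) (fun t ht => ?_)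
      (fun t ht => ?_) (fun t ht => ?_)
    · exact ((hω t (hsub ht)).div (hu t (hsub ht))
        (hu_pos t (hsub ht)).ne').continuousAt.continuousWithinAt
    · have ht' := hsub (interior_subset ht)
      exact ((hω t ht').div (hu t ht') (hu_pos t ht').ne').hasDerivWithinAt
    · have ht' := interior_subset ht
      exact div_nonneg ((sub_nonneg.2 hWa).trans (hW hac ht' ht'.1)) (sq_nonneg _)
  have hc_pos : 0 < ω c / u c :=
    (div_pos hωa (hu_pos a (hsub hac))).trans_le (hquot hac hcc hc.1)
  exact (div_pos_iff_of_pos_right (hu_pos c hc)).1 hc_pos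

theorem sq_add_deriv_sq_eq_of_conformal {g ℓ r : ℝ → ℝ} {β a b : ℝ}
    (hg : ∀ t ∈ Icc a b, DifferentiableAt ℝ g (r t)) (hℓ : ∀ x, HasDerivAt ℓ β x)
    (hr : ∀ t ∈ Icc a b, DifferentiableAt ℝ r t)
    (hr' : ∀ t ∈ Icc a b, DifferentiableAt ℝ (deriv r) t)
    (hE : ∀ t ∈ Icc a b, 0 ≤ g (r t) + deriv r t ^ 2)
    (hr'' : ∀ t ∈ Icc a b, deriv (deriv r) t =
      -(1/2) * deriv g (r t) + β * √(g (r t) + deriv r t ^ 2))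
    (hℓ_pos : ∀ t ∈ Icc a b, 0 < ℓ (r t)) (ha : g (r a) + deriv r a ^ 2 = ℓ (r a) ^ 2) :
    ∀ t ∈ Icc a b, g (r t) + deriv r t ^ 2 = ℓ (r t) ^ 2 := by
  have hden : ∀ t ∈ Icc a b, 0 < √(g (r t) + deriv r t ^ 2) + ℓ (r t) := fun t ht =>
    add_pos_of_nonneg_of_pos (Real.sqrt_nonneg _) (hℓ_pos t ht)
  -- `F = g(r) + r'² - ℓ(r)²` has `F' = 2βr'(√(F + ℓ(r)²) - ℓ(r)) = k F`: a linear equation,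
  -- which sidesteps the singularity of `√` at `0`
  let k t := 2 * β * deriv r t / (√(g (r t) + deriv r t ^ 2) + ℓ (r t))
  have hk : ContinuousOn k (Icc a b) := fun t ht =>
    ((continuousAt_const.mul (hr' t ht).continuousAt).div
      ((((hg t ht).continuousAt.comp (hr t ht).continuousAt).add
        ((hr' t ht).continuousAt.pow 2)).sqrt.add ((hℓ _).continuousAt.comp (hr t ht).continuousAt))
      (hden t ht).ne').continuousWithinAt
  have hF : ∀ t ∈ Icc a b, HasDerivAt (fun s => g (r s) + deriv r s ^ 2 - ℓ (r s) ^ 2)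
      (k t * (g (r t) + deriv r t ^ 2 - ℓ (r t) ^ 2)) t := by
    intro t ht
    have hd := (((hg t ht).hasDerivAt.comp t (hr t ht).hasDerivAt).add
      ((hr' t ht).hasDerivAt.fun_pow 2)).sub (((hℓ (r t)).comp t (hr t ht).hasDerivAt).fun_pow 2)
    refine hd.congr_deriv ?_
    have hfactor : g (r t) + deriv r t ^ 2 - ℓ (r t) ^ 2 = (√(g (r t) + deriv r t ^ 2) - ℓ (r t))
        * (√(g (r t) + deriv r t ^ 2) + ℓ (r t)) := by
      linear_combination -Real.sq_sqrt (hE t ht)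
    rw [hfactor, hr'' t ht]
    simp only [k, Function.comp_apply]
    field_simp [(hden t ht).ne']
    ring
  intro t ht
  exact sub_eq_zero.1 (eq_zero_of_hasDerivAt_eq_mul hk hF (sub_eq_zero.2 ha) t ht)

theorem D_self (m x : ℝ) (hx : x ≠ 0) : D m m x = (x - m) ^ 2 / x ^ 2 := by
  unfold D
  field_simp
  ring

theorem hasDerivAt_D (m q x : ℝ) (hx : x ≠ 0) :
    HasDerivAt (D m q) (2 * m / x ^ 2 - 2 * q ^ 2 / x ^ 3) x := by
  have hinv := hasDerivAt_inv hx
  have hd := ((hasDerivAt_const x (1 : ℝ)).sub (hinv.const_mul (2 * m))).add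
    ((hinv.fun_pow 2).const_mul (q ^ 2))
  have hD : D m q = fun y => 1 - 2 * m * y⁻¹ + q ^ 2 * y⁻¹ ^ 2 := by
    funext y
    simp only [D, div_eq_mul_inv, inv_pow]
  rw [hD]
  refine hd.congr_deriv ?_
  norm_num
  field_simp
  ring

/-- `√(D(r) + r'²)` as a function of `r` along the curve starting at rest at `rs`, by
conservation of `√(D(r) + r'²) - βr`. -/
noncomputable def energyRoot (m rs x : ℝ) : ℝ := (rs - m) * (2 * x - rs) / rs ^ 2

theorem hasDerivAt_energyRoot (m rs x : ℝ) :
    HasDerivAt (energyRoot m rs) (2 * (rs - m) / rs ^ 2) x := by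
  have hd := ((((hasDerivAt_id x).const_mul 2).sub_const rs).const_mul (rs - m)).div_const (rs ^ 2)
  exact hd.congr_deriv (by ring)

theorem energyRoot_pos {m rs x : ℝ} (hm : 0 < m) (hrs : m < rs) (hx : rs < 2 * x) :
    0 < energyRoot m rs x :=
  div_pos (mul_pos (sub_pos.2 hrs) (sub_pos.2 hx)) (pow_pos (by linarith) 2)

theorem energyRoot_sq_lt_D {m rs x : ℝ} (hm : 0 < m) (hrs : m < rs) (hx : rs < x)
    (hx' : x < m * rs / (2 * (rs - m))) : energyRoot m rs x ^ 2 < D m m x := by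
  have hrs0 : 0 < rs := by linarith
  have hx0 : 0 < x := by linarith
  rw [lt_div_iff₀ (by linarith)] at hx'
  have hfactor : energyRoot m rs x ^ 2 - D m m x = (x - rs) * (2 * (rs - m) * x - m * rs)
      * ((rs - m) * (2 * x - rs) * x + (x - m) * rs ^ 2) / (rs ^ 4 * x ^ 2) := by
    rw [energyRoot, D_self m x hx0.ne']
    field_simp
    ring
  have hpos : 0 < (rs - m) * (2 * x - rs) * x + (x - m) * rs ^ 2 := by
    have : 0 < (rs - m) * (2 * x - rs) * x := by
      apply mul_pos (mul_pos _ _) hx0 <;> linarith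
    nlinarith [sq_nonneg rs]
  refine sub_neg.1 (hfactor ▸ div_neg_of_neg_of_pos ?_ (by positivity))
  exact mul_neg_of_neg_of_pos (mul_neg_of_pos_of_neg (by linarith) (by linarith)) hpos

/-- `comparison m ∘ r` is a positive supersolution `u'' ≤ V u` of the deviation equation as long
as `m ≤ r ≤ rs` and `37m/25 ≤ rs ≤ 3m/2`. -/
def comparison (m x : ℝ) : ℝ := 400 * m ^ 3 - (27 * m - 20 * x) ^ 3

theorem hasDerivAt_comparison (m x : ℝ) :
    HasDerivAt (comparison m) (60 * (27 * m - 20 * x) ^ 2) x := by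
  have hd :=
    ((((hasDerivAt_id x).const_mul 20).const_sub (27 * m)).fun_pow 3).const_sub (400 * m ^ 3)
  exact hd.congr_deriv (by simp; ring)

theorem hasDerivAt_comparison_deriv (m x : ℝ) :
    HasDerivAt (fun y => 60 * (27 * m - 20 * y) ^ 2) (-2400 * (27 * m - 20 * x)) x := by
  have hd := (((hasDerivAt_id x).const_mul 20).const_sub (27 * m)).fun_pow 2 |>.const_mul 60
  exact hd.congr_deriv (by simp; ring)

theorem comparison_pos {m x : ℝ} (hm : 0 < m) (hx : m ≤ x) : 0 < comparison m x := by
  have hcube : (27 * m - 20 * x) ^ 3 ≤ (7 * m) ^ 3 := (Odd.pow_le_pow (by decide)).2 (by linarith)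
  unfold comparison
  nlinarith [pow_pos hm 3]

theorem comparison_supersolution_poly {m rs x : ℝ} (hm : 0 < m) (hx : m ≤ x) (hxrs : x ≤ rs)
    (hrs : 37 * m ≤ 25 * rs) (hrs' : 2 * rs ≤ 3 * m) :
    -2400 * (27 * m - 20 * x)
        * ((rs - m) ^ 2 * (2 * x - rs) ^ 2 * x ^ 4 - (x - m) ^ 2 * x ^ 2 * rs ^ 4)
      + 60 * (27 * m - 20 * x) ^ 2
        * (2 * (rs - m) ^ 2 * (2 * x - rs) * x ^ 4 - (m * x - m ^ 2) * x * rs ^ 4)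
      ≤ (4 * (rs - m) ^ 2 * x ^ 4 + (2 * m * x - 3 * m ^ 2) * rs ^ 4) * comparison m x := by
  have h (i j k l n : ℕ) :
      0 ≤ (x - m) ^ i * (rs - x) ^ j * (25 * rs - 37 * m) ^ k * (3 * m - 2 * rs) ^ l * m ^ n := by
    have := sub_nonneg.2 hx; have := sub_nonneg.2 hxrs; have := sub_nonneg.2 hrs
    have := sub_nonneg.2 hrs'; positivity
  unfold comparison
  -- Handelman certificate: the difference is a nonnegative combination of these products of the
  -- constraints (coefficients found by linear programming)
  linarith [h 1 0 7 0 1, h 0 0 6 1 2, h 1 4 1 0 3, h 3 1 2 0 3, h 1 1 6 0 1, h 0 0 2 1 6,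
    h 1 2 3 0 3, h 7 2 0 0 0, h 0 0 1 1 7, h 1 4 0 0 4, h 0 2 0 1 6, h 7 1 1 0 0, h 1 2 0 1 5,
    h 3 2 2 0 2, h 5 1 3 0 0, h 0 7 1 0 1, h 2 1 6 0 0, h 7 0 2 0 0, h 5 0 4 0 0, h 0 0 4 1 4,
    h 1 1 7 0 0, h 0 0 5 1 3, h 2 4 1 0 2, h 0 1 4 1 3, h 1 7 0 0 1, h 0 1 3 1 4, h 1 2 4 0 2,
    h 1 1 5 0 2, h 0 0 7 1 1, h 1 3 0 0 5, h 0 0 8 1 0, h 0 2 1 1 5, h 3 1 1 0 4, h 0 2 2 1 4,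
    h 2 1 5 0 1, h 5 0 0 0 4, h 1 1 4 0 3, h 2 7 0 0 0, h 5 1 1 0 2, h 1 7 1 0 0, h 1 4 3 0 1,
    h 0 5 4 0 0, h 1 0 8 0 0, h 0 5 2 0 2, h 2 0 1 1 5, h 1 6 2 0 0, h 1 3 5 0 0, h 6 1 0 0 2,
    h 4 0 0 1 4, h 2 4 0 0 3, h 1 1 3 0 4, h 1 0 6 0 2, h 0 0 3 1 5, h 4 1 3 0 1, h 6 0 0 0 3]

theorem comparison_supersolution {m rs x v a : ℝ} (hm : 0 < m) (hx : m ≤ x) (hxrs : x ≤ rs)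
    (hrs : 37 * m / 25 ≤ rs) (hrs' : rs ≤ 3 * m / 2)
    (hv : D m m x + v ^ 2 = energyRoot m rs x ^ 2)
    (ha : a = -(1/2) * deriv (D m m) x + 2 * (rs - m) / rs ^ 2 * energyRoot m rs x) :
    -2400 * (27 * m - 20 * x) * v * v + 60 * (27 * m - 20 * x) ^ 2 * a
      ≤ ((2 * (rs - m) / rs ^ 2) ^ 2 + 2 * m / x ^ 3 - 3 * m ^ 2 / x ^ 4) * comparison m x := by
  have hx0 : 0 < x := by linarith
  have hrs0 : 0 < rs := by linarith
  have hvv : v * v = energyRoot m rs x ^ 2 - D m m x := by linear_combination hv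
  have key := comparison_supersolution_poly hm hx hxrs (by linarith) (by linarith)
  rw [mul_assoc _ v v, hvv, ha, (hasDerivAt_D m m x hx0.ne').deriv, energyRoot,
    D_self m x hx0.ne']
  rw [← sub_nonneg] at key ⊢
  refine (div_nonneg key (by positivity : (0:ℝ) ≤ x ^ 4 * rs ^ 4)).trans_eq ?_
  field_simp
  ring

/-- No conjugate points near the critical radius in the extremal case `q = m` (so
`r₊ = m`, `r_⊛ = 3m/2`): there exists `r_⋆ ∈ (m, 3m/2)` such that for every
`r_* ∈ (r_⋆, 3m/2)`, along a conformal curve starting at `r_*` and reaching the horizon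
`r = m` at time `T`, the deviation scalar `ω` solving
`ω″ = (β² + 2m/r³ - 3m²/r⁴)ω + ζ` with `β = 2(r_* - m)/r_*²`, `ζ = -2(r_* - 2m)/r_*³`,
`ω(0) = r_*/(r_* - m)` and `ω′(0) = 0` remains positive on `[0, T]`. -/
theorem no_conjugate_points_extremal_near_critical (m : ℝ) (hm : 0 < m) :
    ∃ rstar : ℝ, m < rstar ∧ rstar < 3*m/2 ∧
      ∀ rs : ℝ, rstar < rs → rs < 3*m/2 →
      ∀ (T : ℝ) (r ω : ℝ → ℝ), 0 < T →
        r 0 = rs → deriv r 0 = 0 →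
        (∀ t ∈ Set.Icc (0:ℝ) T, DifferentiableAt ℝ r t) →
        (∀ t ∈ Set.Icc (0:ℝ) T, DifferentiableAt ℝ (deriv r) t) →
        (∀ t ∈ Set.Icc (0:ℝ) T, 0 ≤ D m m (r t) + (deriv r t)^2) →
        (∀ t ∈ Set.Icc (0:ℝ) T, deriv (deriv r) t =
          -(1/2) * deriv (D m m) (r t)
            + (2*(rs - m)/rs^2) * Real.sqrt (D m m (r t) + (deriv r t)^2)) →
        (∀ t ∈ Set.Ico (0:ℝ) T, m < r t) →
        r T = m →
        (∀ t ∈ Set.Icc (0:ℝ) T, DifferentiableAt ℝ ω t) →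
        (∀ t ∈ Set.Icc (0:ℝ) T, DifferentiableAt ℝ (deriv ω) t) →
        (∀ t ∈ Set.Icc (0:ℝ) T, deriv (deriv ω) t =
          ((2*(rs - m)/rs^2)^2 + 2*m/(r t)^3 - 3*m^2/(r t)^4) * ω t
            + (-2*(rs - 2*m)/rs^3)) →
        ω 0 = rs/(rs - m) →
        deriv ω 0 = 0 →
        ∀ t ∈ Set.Icc (0:ℝ) T, 0 < ω t := by
  refine ⟨37 * m / 25, by linarith, by linarith, ?_⟩
  intro rs hrs₁ hrs₂ T r ω _ hr0 hr'0 hr hr' hE hr'' hr_gt hrT hω hω' hω'' hω0 hω'0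
  have hr_ge : ∀ t ∈ Icc 0 T, m ≤ r t := fun t ht =>
    ht.2.eq_or_lt.elim (fun h => (h ▸ hrT).ge) fun h => (hr_gt t ⟨ht.1, h⟩).le
  have henergy : ∀ t ∈ Icc 0 T, D m m (r t) + deriv r t ^ 2 = energyRoot m rs (r t) ^ 2 :=
    sq_add_deriv_sq_eq_of_conformal
      (fun t ht => (hasDerivAt_D m m (r t) (by linarith [hr_ge t ht])).differentiableAt)
      (hasDerivAt_energyRoot m rs) hr hr' hE hr''
      (fun t ht => energyRoot_pos hm (by linarith) (by linarith [hr_ge t ht]))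
      (by rw [hr0, hr'0, D_self m rs (by linarith), energyRoot]; field_simp; ring)
  -- `r'² = energyRoot² - D` keeps `r` out of the band `(rs, m rs / (2(rs - m)))`
  have hr_le : ∀ t ∈ Icc 0 T, r t ≤ rs :=
    forall_le_of_forall_notMem_Ioo (fun t ht => (hr t ht).continuousAt.continuousWithinAt)
      hr0.le (show rs < m * rs / (2 * (rs - m)) by rw [lt_div_iff₀ (by linarith)]; nlinarith)
      fun t ht hband => (energyRoot_sq_lt_D hm (by linarith) hband.1 hband.2).not_ge
        (by nlinarith [henergy t ht, sq_nonneg (deriv r t)])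
  have hζ : 0 < -2 * (rs - 2 * m) / rs ^ 3 := div_pos (by linarith) (pow_pos (by linarith) 3)
  refine pos_of_sturm_comparison (u := fun t => comparison m (r t))
    (u' := fun t => 60 * (27 * m - 20 * r t) ^ 2 * deriv r t)
    (fun t ht => (hasDerivAt_comparison m (r t)).comp t (hr t ht).hasDerivAt)
    (fun t ht => ((hasDerivAt_comparison_deriv m (r t)).comp t (hr t ht).hasDerivAt).mul
      (hr' t ht).hasDerivAt)
    (fun t ht => (hω t ht).hasDerivAt) (fun t ht => (hω' t ht).hasDerivAt)
    (fun t ht => comparison_pos hm (hr_ge t ht))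
    (fun t ht => comparison_supersolution hm (hr_ge t ht) (hr_le t ht) hrs₁.le hrs₂.le
      (henergy t ht) ?_)
    (fun t ht => by rw [hω'' t ht]; linarith [hζ])
    (by rw [hω0]; exact div_pos (by linarith) (by linarith)) (by simp [hr'0, hω'0])
  rw [hr'' t ht, henergy t ht,
    Real.sqrt_sq (energyRoot_pos hm (by linarith) (by linarith [hr_ge t ht])).le]
end
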